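/- arXiv:2408.12265 — 5 statements merged into one kernel-verified Lean document; each statement's English description precedes it below -/
import Mathlib

section
/- For all d ≥ 2 and n ≥ 2, the tensor rank of the n-qudit N state equals (n−1)(d−1)+1: rk(N(d,n)) = (n−1)(d−1)+1. -/
/-!
Slicing `N(d,n)` along its first party gives `N(d,n-1)` for the index `0` and the product
tensors `|0…0⟩|d-1-j⟩` for the indices `j ≠ 0`; hence the rank grows by at most `d-1` per
party. For the lower bound, the substitution method trades each of these `d-1` linearly
independent slices for one rank-one term, leaving `N(d,n-1) + |0…0⟩|w⟩` with `w_{d-1} = 0`.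
Such perturbed N states form a family closed under this step, and its one-party members
`|d-1⟩ + |w⟩` are nonzero.
-/

namespace QIT

noncomputable section

/-- The coordinate description of the rank-one (simple) tensor
`v 1 ⊗ ⋯ ⊗ v n` with local factors `v i : ℂ^{α i}`.  Throughout, a tensor in
`ℂ^{α 1} ⊗ ⋯ ⊗ ℂ^{α n}` (each local space `ℂ^{α i}` being the space `α i → ℂ`
with its standard basis) is identified with its coefficient array, a function
`(∀ i, α i) → ℂ` on multi-indices. -/
def prodTensor {ι : Type} [Fintype ι] {α : ι → Type} (v : ∀ i, α i → ℂ) :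
    (∀ i, α i) → ℂ :=
  fun j => ∏ i, v i (j i)

/-- `T` has tensor rank at most `r`: it is a sum of `r` simple tensors. -/
def HasRankLE {ι : Type} [Fintype ι] {α : ι → Type} (T : (∀ i, α i) → ℂ) (r : ℕ) : Prop :=
  ∃ v : Fin r → ∀ i, α i → ℂ, T = ∑ p, prodTensor (v p)

/-- The tensor rank of `T`. -/
def tensorRank {ι : Type} [Fintype ι] {α : ι → Type} (T : (∀ i, α i) → ℂ) : ℕ :=
  sInf {r | HasRankLE T r}

/-- The border rank of `T`: the smallest `r` such that `T` is a limit of tensors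
of rank at most `r`. -/
def borderRank {ι : Type} [Fintype ι] {α : ι → Type} (T : (∀ i, α i) → ℂ) : ℕ :=
  sInf {r | T ∈ closure {S : (∀ i, α i) → ℂ | HasRankLE S r}}

/-- The slice of `T` in the `i`-th factor determined by the multi-index `m`
(the value of `m` at `i` is irrelevant). -/
def sliceAt {ι : Type} [DecidableEq ι] {α : ι → Type} (T : (∀ i, α i) → ℂ) (i : ι)
    (m : ∀ j, α j) : α i → ℂ :=
  fun k => T (Function.update m i k)

/-- `T ∈ V' ⊗ (⊗_{j ≠ i} V_j)` in the `i`-th factor: all `i`-th slices of `T`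
lie in the subspace `V'`. -/
def FactorIn {ι : Type} [DecidableEq ι] {α : ι → Type} (T : (∀ i, α i) → ℂ) (i : ι)
    (V' : Submodule ℂ (α i → ℂ)) : Prop :=
  ∀ m : ∀ j, α j, sliceAt T i m ∈ V'

/-- `T` is concise in the `i`-th factor: `T ∉ V' ⊗ (⊗_{j ≠ i} V_j)` for every
proper subspace `V' ⊊ V_i`. -/
def Concise {ι : Type} [DecidableEq ι] {α : ι → Type} (T : (∀ i, α i) → ℂ) (i : ι) : Prop :=
  ∀ V' : Submodule ℂ (α i → ℂ), FactorIn T i V' → V' = ⊤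

/-- Contraction `⟨f|T` of the first factor of `T` with a covector `f`. -/
def contractFirst {n : ℕ} {α : Fin (n + 1) → Type} (f : (α 0 → ℂ) →ₗ[ℂ] ℂ)
    (T : (∀ i, α i) → ℂ) : (∀ i : Fin n, α i.succ) → ℂ :=
  fun m => f (fun k => T (Fin.cons k m))

/-- Persistent tensors, defined inductively: a bipartite tensor is persistent
iff it is `1`-concise; an `n`-partite tensor (`n > 2`) is persistent iff it is
`1`-concise and there is a proper subspace `S ⊊ V₁^∨` such that `⟨f|T` is
persistent whenever `f ∉ S`. -/
def Persistent : {n : ℕ} → {α : Fin n → Type} → ((∀ i, α i) → ℂ) → Prop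
  | 0, _, _ => False
  | 1, _, _ => False
  | 2, _, T => Concise T 0
  | (n + 3), α, T =>
      Concise T 0 ∧
      ∃ S : Submodule ℂ ((α 0 → ℂ) →ₗ[ℂ] ℂ), S ≠ ⊤ ∧
        ∀ f : (α 0 → ℂ) →ₗ[ℂ] ℂ, f ∉ S → Persistent (contractFirst f T)

/-- Apply the linear maps with matrices `A i` to the factors of `T`
(the coordinate form of `(A 1 ⊗ ⋯ ⊗ A n) T`). -/
def applyLin {ι : Type} [Fintype ι] [DecidableEq ι] {α β : ι → Type} [∀ i, Fintype (α i)]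
    (A : ∀ i, β i → α i → ℂ) (T : (∀ i, α i) → ℂ) : (∀ i, β i) → ℂ :=
  fun j => ∑ m : ∀ i, α i, (∏ i, A i (j i) (m i)) * T m

/-- `T` can be transformed into `S` via SLOCC. -/
def SLOCCto {ι : Type} [Fintype ι] [DecidableEq ι] {α β : ι → Type} [∀ i, Fintype (α i)]
    (T : (∀ i, α i) → ℂ) (S : (∀ i, β i) → ℂ) : Prop :=
  ∃ A : ∀ i, β i → α i → ℂ, applyLin A T = S

/-- `T` degenerates into `S` via SLOCC: there are local maps `A i (ε)` with
entries polynomial in `ε` and an approximation degree `e` with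
`lim_{ε → 0} ε⁻ᵉ (A 1 (ε) ⊗ ⋯ ⊗ A n (ε)) T = S`. -/
def Degenerates {ι : Type} [Fintype ι] [DecidableEq ι] {α β : ι → Type} [∀ i, Fintype (α i)]
    (T : (∀ i, α i) → ℂ) (S : (∀ i, β i) → ℂ) : Prop :=
  ∃ (A : ∀ i, β i → α i → Polynomial ℂ) (e : ℕ),
    Filter.Tendsto
      (fun ε : ℂ => (ε ^ e)⁻¹ • applyLin (fun i r c => (A i r c).eval ε) T)
      (nhdsWithin 0 {0}ᶜ) (nhds S)

/-- The rank of the flattening of `T` across the bipartition `I | Iᶜ`. -/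
def flatRank {ι : Type} [Fintype ι] [DecidableEq ι] {α : ι → Type}
    [∀ i, Fintype (α i)] (T : (∀ i, α i) → ℂ) (I : Finset ι) : ℕ :=
  Matrix.rank (Matrix.of fun (a : ∀ i : {x // x ∈ I}, α i.1) (b : ∀ i : {x // x ∉ I}, α i.1) =>
    T fun i => if h : i ∈ I then a ⟨i, h⟩ else b ⟨i, h⟩)

/-- The direct sum `T ⊕ S` of two `n`-partite tensors, a tensor with `i`-th
local space `U_i ⊕ V_i`. -/
def directSum {ι : Type} [Fintype ι] {α β : ι → Type}
    (T : (∀ i, α i) → ℂ) (S : (∀ i, β i) → ℂ) : (∀ i, α i ⊕ β i) → ℂ :=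
  fun j =>
    if h : ∀ i, (j i).isLeft then T (fun i => (j i).getLeft (h i))
    else if h' : ∀ i, (j i).isRight then S (fun i => (j i).getRight (h' i))
    else 0

/-- The Kronecker product `T ⊠ S` of two `n`-partite tensors, an `n`-partite
tensor with `i`-th local space `U_i ⊗ V_i`. -/
def kron {ι : Type} {α β : ι → Type} (T : (∀ i, α i) → ℂ) (S : (∀ i, β i) → ℂ) :
    (∀ i, α i × β i) → ℂ :=
  fun j => T (fun i => (j i).1) * S (fun i => (j i).2)

/-- The outer (tensor) product `T ⊗ S` of an `n`-partite and an `m`-partite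
tensor, regarded as an `(n+m)`-partite tensor. -/
def outer {ι κ : Type} {α : ι → Type} {β : κ → Type}
    (T : (∀ i, α i) → ℂ) (S : (∀ k, β k) → ℂ) :
    (∀ x : ι ⊕ κ, Sum.elim α β x) → ℂ :=
  fun j => T (fun i => j (Sum.inl i)) * S (fun k => j (Sum.inr k))

/-- The `m`-fold Kronecker power `T^{⊠ m}` of an `n`-partite tensor with all
local spaces `ℂ^d`: an `n`-partite tensor with local spaces `(ℂ^d)^{⊗ m}`. -/
def kpow (d n : ℕ) (T : (Fin n → Fin d) → ℂ) (m : ℕ) :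
    (Fin n → (Fin m → Fin d)) → ℂ :=
  fun j => ∏ t : Fin m, T (fun i => j i t)

/-- The `n`-qubit W state `W_n = Σ_{i} |0⟩^{⊗(n-i-1)} ⊗ |1⟩ ⊗ |0⟩^{⊗ i}`:
its coefficient on a multi-index is `1` iff exactly one entry is `1`. -/
def Wstate (n : ℕ) : (Fin n → Fin 2) → ℂ :=
  fun m => if (∑ i, (m i : ℕ)) = 1 then 1 else 0

/-- The `n`-qudit GHZ state `G(d,n) = Σ_{j=0}^{d-1} |j⟩^{⊗ n}`. -/
def Gstate (d n : ℕ) : (Fin n → Fin d) → ℂ :=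
  fun m => if ∃ j : Fin d, ∀ i, m i = j then 1 else 0

/-- The `n`-qudit L state `L(d,n) = Σ_{j₁+⋯+jₙ = d-1} |j₁ ⋯ jₙ⟩`. -/
def Lstate (d n : ℕ) : (Fin n → Fin d) → ℂ :=
  fun m => if (∑ i, (m i : ℕ)) = d - 1 then 1 else 0

/-- The `n`-qudit M state
`M(d,n) = Σᵢ |0⟩^{⊗(n-i-1)} |d-1⟩ |0⟩^{⊗ i}
  + Σ_{i+k+l=n-2} Σ_{j=1}^{d-2} |0⟩^{⊗i} |j⟩ |0⟩^{⊗k} |d-j-1⟩ |0⟩^{⊗l}`: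
its coefficient on a multi-index is `1` iff the entries sum to `d-1` and at
most two entries are nonzero. -/
def Mstate (d n : ℕ) : (Fin n → Fin d) → ℂ :=
  fun m =>
    if (∑ i, (m i : ℕ)) = d - 1 ∧
        (Finset.univ.filter fun i => (m i : ℕ) ≠ 0).card ≤ 2 then 1 else 0

/-- The `n`-qudit N state
`N(d,n) = |0⟩^{⊗(n-1)} |d-1⟩ + Σ_{i=0}^{n-2} Σ_{j=1}^{d-1} |0⟩^{⊗(n-i-2)} |j⟩ |0⟩^{⊗i} |d-j-1⟩`:
its coefficient on a multi-index is `1` iff the entries sum to `d-1` and at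
most one of the first `n-1` entries is nonzero. -/
def Nstate (d n : ℕ) : (Fin n → Fin d) → ℂ :=
  fun m =>
    if (∑ i, (m i : ℕ)) = d - 1 ∧
        (Finset.univ.filter fun i : Fin n => (i : ℕ) + 1 < n ∧ (m i : ℕ) ≠ 0).card ≤ 1
    then 1 else 0

/-- Apply a linear endomorphism `π` of the `i`-th local space to the `i`-th
factor of `T`, i.e. `(id^{⊗(i-1)} ⊗ π ⊗ id^{⊗(n-i)}) T`. -/
def applyAtFactor {ι : Type} [DecidableEq ι] {α : ι → Type}
    (T : (∀ i, α i) → ℂ) (i : ι) (π : (α i → ℂ) →ₗ[ℂ] (α i → ℂ)) :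
    (∀ j, α j) → ℂ :=
  fun j => π (sliceAt T i j) (j i)

end

section Rank

variable {ι : Type} [Fintype ι] {α : ι → Type}

theorem hasRankLE_sum_prodTensor {κ : Type} [Fintype κ] (v : κ → ∀ i, α i → ℂ) :
    HasRankLE (∑ k, prodTensor (v k)) (Fintype.card κ) :=
  ⟨fun p => v ((Fintype.equivFin κ).symm p),
    ((Fintype.equivFin κ).symm.sum_comp fun k => prodTensor (v k)).symm⟩

theorem HasRankLE.eq_zero {T : (∀ i, α i) → ℂ} (hT : HasRankLE T 0) : T = 0 := by
  obtain ⟨v, rfl⟩ := hT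
  simp

theorem smul_prodTensor [DecidableEq ι] (c : ℂ) (v : ∀ i, α i → ℂ) (i : ι) :
    c • prodTensor v = prodTensor (Function.update v i (c • v i)) := by
  ext m
  simp only [prodTensor, Pi.smul_apply, smul_eq_mul]
  rw [← Finset.mul_prod_erase _ _ (Finset.mem_univ i),
    ← Finset.mul_prod_erase _ _ (Finset.mem_univ i), Function.update_self, Pi.smul_apply,
    smul_eq_mul, mul_assoc]
  congr 2
  refine Finset.prod_congr rfl fun j hj => ?_
  rw [Function.update_of_ne (Finset.ne_of_mem_erase hj)]

end Rank

section Slice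

variable {n : ℕ} {α : Fin (n + 1) → Type}

def firstSlice (j : α 0) : ((∀ i, α i) → ℂ) →ₗ[ℂ] (∀ i : Fin n, α i.succ) → ℂ :=
  LinearMap.funLeft ℂ ℂ (Fin.cons j)

@[simp]
theorem firstSlice_apply (j : α 0) (T : (∀ i, α i) → ℂ) (m : ∀ i : Fin n, α i.succ) :
    firstSlice j T m = T (Fin.cons j m) :=
  rfl

theorem prodTensor_cons (v₀ : α 0 → ℂ) (v : ∀ i : Fin n, α i.succ → ℂ) (m : ∀ i, α i) :
    prodTensor (Fin.cons v₀ v : ∀ i, α i → ℂ) m = v₀ (m 0) * prodTensor v (Fin.tail m) := by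
  simp [prodTensor, Fin.prod_univ_succ, Fin.tail]

theorem firstSlice_prodTensor (j : α 0) (v : ∀ i, α i → ℂ) :
    firstSlice j (prodTensor v) = v 0 j • prodTensor fun i : Fin n => v i.succ := by
  ext m
  simp [prodTensor, Fin.prod_univ_succ]

theorem hasRankLE_of_firstSlice [Fintype (α 0)] [DecidableEq (α 0)] {T : (∀ i, α i) → ℂ}
    {r : α 0 → ℕ} (hT : ∀ j, HasRankLE (firstSlice j T) (r j)) : HasRankLE T (∑ j, r j) := by
  choose v hv using hT
  have hcard : Fintype.card (Σ j, Fin (r j)) = ∑ j, r j := by simp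
  rw [← hcard]
  convert hasRankLE_sum_prodTensor fun x : Σ j, Fin (r j) =>
    (Fin.cons (Pi.single x.1 1) (v x.1 x.2) : ∀ i, α i → ℂ)
  ext m
  have hm : T m = firstSlice (m 0) T (Fin.tail m) := by simp
  rw [hm, hv]
  simp [Fintype.sum_sigma, prodTensor_cons, Pi.single_apply]

theorem HasRankLE.exists_sub_smul_firstSlice {T : (∀ i, α i) → ℂ} {r : ℕ}
    (hT : HasRankLE T (r + 1)) {a : α 0} (ha : firstSlice a T ≠ 0) :
    ∃ (T' : (∀ i, α i) → ℂ) (c : α 0 → ℂ), HasRankLE T' r ∧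
      ∀ j, firstSlice j T' = firstSlice j T - c j • firstSlice a T := by
  classical
  obtain ⟨v, rfl⟩ := hT
  obtain ⟨p₀, hp₀⟩ : ∃ p, v p 0 a ≠ 0 := by
    by_contra! h
    exact ha (by simp [firstSlice_prodTensor, h])
  set c : α 0 → ℂ := fun j => v p₀ 0 j / v p₀ 0 a
  set w : Fin (r + 1) → ∀ i, α i → ℂ := fun p =>
    Function.update (v p) 0 fun j => v p 0 j - c j * v p 0 a
  have hw₀ : prodTensor (w p₀) = 0 := by
    ext m
    refine Finset.prod_eq_zero (Finset.mem_univ 0) ?_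
    simp [w, c, div_mul_cancel₀ _ hp₀]
  refine ⟨∑ p, prodTensor (w p), c, ⟨fun q => w (p₀.succAbove q), ?_⟩, fun j => ?_⟩
  · rw [Fin.sum_univ_succAbove _ p₀, hw₀, zero_add]
  · simp [w, firstSlice_prodTensor, sub_smul, Finset.smul_sum, mul_smul]

end Slice

section Substitution

variable {n : ℕ} {α : Fin (n + 2) → Type}

theorem hasRankLE_firstSlice {T : (∀ i, α i) → ℂ} {r : ℕ} (hT : HasRankLE T r) (j : α 0) :
    HasRankLE (firstSlice j T) r := by
  obtain ⟨v, rfl⟩ := hT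
  refine ⟨fun p => Function.update (fun i : Fin (n + 1) => v p i.succ) 0 (v p 0 j • v p 1), ?_⟩
  simp only [map_sum, firstSlice_prodTensor]
  exact Finset.sum_congr rfl fun p _ => smul_prodTensor _ _ _

/-- The substitution method: a rank-one term whose first factor does not vanish at `a` is
removed by subtracting multiples of the slice `a` from all slices, which lowers the dimension
of the span of the slices in `S` by at most one. -/
theorem HasRankLE.exists_firstSlice_add_mem_span [∀ i, Fintype (α i)] (S : Finset (α 0))
    (j₀ : α 0) {T : (∀ i, α i) → ℂ} {r : ℕ} (hT : HasRankLE T r) :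
    ∃ X ∈ Submodule.span ℂ ((firstSlice · T) '' S), ∃ r',
      r' + Set.finrank ℂ ((firstSlice · T) '' S) ≤ r ∧ HasRankLE (firstSlice j₀ T + X) r' := by
  induction r generalizing T with
  | zero =>
    obtain rfl := hT.eq_zero
    refine ⟨0, zero_mem _, 0, ?_, by simpa using hasRankLE_firstSlice hT j₀⟩
    simp [Set.finrank]
  | succ r ih =>
    by_cases hS : ∀ a ∈ S, firstSlice a T = 0
    · refine ⟨0, zero_mem _, r + 1, ?_, by simpa using hasRankLE_firstSlice hT j₀⟩
      have hV : Submodule.span ℂ ((firstSlice · T) '' S) = ⊥ :=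
        Submodule.span_eq_bot.mpr fun _ ⟨a, ha, hx⟩ => hx ▸ hS a ha
      simp [Set.finrank, hV]
    push Not at hS
    obtain ⟨a, haS, ha⟩ := hS
    obtain ⟨T', c, hT', hslice⟩ := hT.exists_sub_smul_firstSlice ha
    obtain ⟨X, hX, r', hr', hX'⟩ := ih hT'
    set V := Submodule.span ℂ ((firstSlice · T) '' S)
    set V' := Submodule.span ℂ ((firstSlice · T') '' S)
    have ha_mem : firstSlice a T ∈ V := Submodule.subset_span ⟨a, haS, rfl⟩
    have hV' : V' ≤ V := by
      rw [Submodule.span_le]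
      rintro _ ⟨j, hj, rfl⟩
      simp only [SetLike.mem_coe]
      rw [hslice]
      exact sub_mem (Submodule.subset_span ⟨j, hj, rfl⟩) (Submodule.smul_mem _ _ ha_mem)
    have hV : V ≤ V' ⊔ ℂ ∙ firstSlice a T := by
      rw [Submodule.span_le]
      rintro _ ⟨j, hj, rfl⟩
      have : firstSlice j T = firstSlice j T' + c j • firstSlice a T := by rw [hslice]; abel
      simp only [SetLike.mem_coe]
      rw [this]
      exact Submodule.add_mem_sup (Submodule.subset_span ⟨j, hj, rfl⟩)
        (Submodule.smul_mem _ _ (Submodule.mem_span_singleton_self _))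
    have hfinrank : Set.finrank ℂ ((firstSlice · T) '' S) ≤
        Set.finrank ℂ ((firstSlice · T') '' S) + 1 :=
      calc Module.finrank ℂ V ≤ Module.finrank ℂ ↥(V' ⊔ ℂ ∙ firstSlice a T) :=
            Submodule.finrank_mono hV
        _ ≤ Module.finrank ℂ V' + Module.finrank ℂ ↥(ℂ ∙ firstSlice a T) :=
            Submodule.finrank_add_le_finrank_add_finrank _ _
        _ = Module.finrank ℂ V' + 1 := by rw [finrank_span_singleton ha]
    refine ⟨X - c j₀ • firstSlice a T, sub_mem (hV' hX) (Submodule.smul_mem _ _ ha_mem), r',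
      by omega, ?_⟩
    convert hX' using 1
    rw [hslice]
    abel

end Substitution

section Nstate

variable {d n : ℕ}

/-- `|0⟩^{⊗ n} ⊗ u`. -/
def zerosTensor (d n : ℕ) : (Fin (d + 1) → ℂ) →ₗ[ℂ] (Fin (n + 1) → Fin (d + 1)) → ℂ where
  toFun u m := if ∀ i : Fin n, m i.castSucc = 0 then u (m (Fin.last n)) else 0
  map_add' u w := by ext m; split_ifs <;> simp [*]
  map_smul' c u := by ext m; split_ifs <;> simp [*]

theorem zerosTensor_snoc (u : Fin (d + 1) → ℂ) (m : Fin n → Fin (d + 1)) (k : Fin (d + 1)) :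
    zerosTensor d n u (Fin.snoc m k) = if ∀ i, m i = 0 then u k else 0 := by
  simp [zerosTensor]

theorem zerosTensor_injective : Function.Injective (zerosTensor d n) := fun u w h => by
  ext k
  simpa [zerosTensor_snoc] using congrFun h (Fin.snoc 0 k)

theorem hasRankLE_zerosTensor (u : Fin (d + 1) → ℂ) : HasRankLE (zerosTensor d n u) 1 := by
  refine ⟨fun _ => Fin.snoc (α := fun _ => Fin (d + 1) → ℂ) (fun _ => Pi.single 0 1) u, ?_⟩
  ext m
  induction m using Fin.snocCases with
  | snoc m k => simp [prodTensor, Fin.prod_univ_castSucc, zerosTensor_snoc, Pi.single_apply,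
      Finset.prod_boole]

theorem firstSlice_zerosTensor_zero (u : Fin (d + 1) → ℂ) :
    firstSlice 0 (zerosTensor d (n + 1) u) = zerosTensor d n u := by
  ext m
  induction m using Fin.snocCases with
  | snoc m k => simp [Fin.cons_snoc_eq_snoc_cons, zerosTensor_snoc, Fin.forall_fin_succ]

theorem firstSlice_zerosTensor_of_ne_zero (u : Fin (d + 1) → ℂ) {j : Fin (d + 1)} (hj : j ≠ 0) :
    firstSlice j (zerosTensor d (n + 1) u) = 0 := by
  ext m
  induction m using Fin.snocCases with
  | snoc m k => simp [Fin.cons_snoc_eq_snoc_cons, zerosTensor_snoc, Fin.forall_fin_succ, hj]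

theorem Nstate_snoc (m : Fin n → Fin (d + 1)) (k : Fin (d + 1)) :
    Nstate (d + 1) (n + 1) (Fin.snoc m k) =
      if ∑ i, (m i : ℕ) + k = d ∧ (Finset.univ.filter fun i => m i ≠ 0).card ≤ 1 then 1
      else 0 := by
  unfold Nstate
  rw [Finset.card_filter, Finset.card_filter, Fin.sum_univ_castSucc, Fin.sum_univ_castSucc]
  simp

theorem Nstate_one : Nstate (d + 1) 1 = zerosTensor d 0 (Pi.single (Fin.last d) 1) := by
  ext m
  induction m using Fin.snocCases with
  | snoc m k =>
    rw [Nstate_snoc, zerosTensor_snoc]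
    simp only [Finset.univ_eq_empty, Finset.sum_empty, Finset.filter_empty, Finset.card_empty,
      zero_add, zero_le_one, and_true, IsEmpty.forall_iff, if_true, Pi.single_apply, Fin.ext_iff,
      Fin.val_last]

theorem firstSlice_Nstate_zero :
    firstSlice 0 (Nstate (d + 1) (n + 2)) = Nstate (d + 1) (n + 1) := by
  ext m
  induction m using Fin.snocCases with
  | snoc m k =>
    simp [Fin.cons_snoc_eq_snoc_cons, Nstate_snoc, Finset.card_filter, Fin.sum_univ_succ]

theorem firstSlice_Nstate_of_ne_zero {j : Fin (d + 1)} (hj : j ≠ 0) :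
    firstSlice j (Nstate (d + 1) (n + 2)) = zerosTensor d n (Pi.single j.rev 1) := by
  ext m
  induction m using Fin.snocCases with
  | snoc m k =>
    rw [firstSlice_apply, Fin.cons_snoc_eq_snoc_cons, Nstate_snoc, zerosTensor_snoc]
    by_cases hm : ∀ i, m i = 0
    · have hk : (j : ℕ) + k = d ↔ k = j.rev := by rw [Fin.ext_iff, Fin.val_rev]; omega
      simp [Finset.card_filter, Fin.sum_univ_succ, hj, hm, hk, Pi.single_apply]
    · simp [Finset.card_filter, Fin.sum_univ_succ, hj, hm]

end Nstate

theorem hasRankLE_Nstate (d n : ℕ) : HasRankLE (Nstate (d + 1) (n + 1)) (n * d + 1) := by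
  induction n with
  | zero => simpa [Nstate_one] using hasRankLE_zerosTensor (n := 0) _
  | succ n ih =>
    have hsum : (n + 1) * d + 1 = ∑ j : Fin (d + 1), if j = 0 then n * d + 1 else 1 := by
      simp only [Fin.sum_univ_succ, ↓reduceIte, Fin.succ_ne_zero, Finset.sum_const,
        Finset.card_univ, Fintype.card_fin, smul_eq_mul, mul_one]
      ring
    rw [hsum]
    refine hasRankLE_of_firstSlice fun j => ?_
    split_ifs with hj
    · rwa [hj, firstSlice_Nstate_zero]
    · rw [firstSlice_Nstate_of_ne_zero hj]
      exact hasRankLE_zerosTensor _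

theorem finrank_firstSlice_Nstate_add_zerosTensor (d n : ℕ) (u : Fin (d + 1) → ℂ) :
    Set.finrank ℂ ((firstSlice · (Nstate (d + 1) (n + 2) + zerosTensor d (n + 1) u)) ''
      (Finset.univ.erase 0 : Finset (Fin (d + 1)))) = d := by
  set S : Finset (Fin (d + 1)) := Finset.univ.erase 0
  have hslice : ∀ j ∈ (S : Set (Fin (d + 1))),
      firstSlice j (Nstate (d + 1) (n + 2) + zerosTensor d (n + 1) u) =
        zerosTensor d n (Pi.single j.rev 1) := fun j hj => by
    have hj : j ≠ 0 := Finset.ne_of_mem_erase hj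
    simp [firstSlice_Nstate_of_ne_zero hj, firstSlice_zerosTensor_of_ne_zero _ hj]
  have hli : LinearIndependent ℂ fun j : (S : Set (Fin (d + 1))) =>
      zerosTensor d n (Pi.single (j : Fin (d + 1)).rev 1) :=
    ((Pi.linearIndependent_single_one (Fin (d + 1)) ℂ).comp _
      (Fin.rev_injective.comp Subtype.val_injective)).map' _
      (LinearMap.ker_eq_bot.mpr zerosTensor_injective)
  rw [Set.image_congr hslice, Set.image_eq_range,
    ← linearIndependent_iff_card_eq_finrank_span.mp hli]
  simp [S]

theorem le_of_hasRankLE_Nstate_add_zerosTensor {d n : ℕ} {u : Fin (d + 1) → ℂ}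
    (hu : u (Fin.last d) = 0) {r : ℕ}
    (h : HasRankLE (Nstate (d + 1) (n + 1) + zerosTensor d n u) r) : n * d + 1 ≤ r := by
  induction n generalizing u r with
  | zero =>
    rw [Nstate_one, ← map_add] at h
    obtain _ | r := r
    · simpa [hu] using
        congrFun (zerosTensor_injective (h.eq_zero.trans (map_zero _).symm)) (Fin.last d)
    · omega
  | succ n ih =>
    obtain ⟨X, hX, r', hr', hX'⟩ := h.exists_firstSlice_add_mem_span (Finset.univ.erase 0) 0
    rw [finrank_firstSlice_Nstate_add_zerosTensor] at hr'
    have hspan : Submodule.span ℂ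
        ((firstSlice · (Nstate (d + 1) (n + 2) + zerosTensor d (n + 1) u)) ''
          (Finset.univ.erase 0 : Finset (Fin (d + 1)))) ≤
        (LinearMap.ker (LinearMap.proj (Fin.last d))).map (zerosTensor d n) := by
      rw [Submodule.span_le]
      rintro _ ⟨j, hj, rfl⟩
      have hj : j ≠ 0 := Finset.ne_of_mem_erase hj
      refine ⟨Pi.single j.rev 1, ?_, ?_⟩
      · simp [Fin.rev_eq_iff, hj]
      · simp [firstSlice_Nstate_of_ne_zero hj, firstSlice_zerosTensor_of_ne_zero _ hj]
    obtain ⟨w, hw, rfl⟩ := hspan hX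
    rw [map_add, firstSlice_Nstate_zero, firstSlice_zerosTensor_zero, add_assoc, ← map_add] at hX'
    have hr'_ge : n * d + 1 ≤ r' := ih (u := u + w) (by simpa [hu] using hw) hX'
    rw [add_one_mul]
    omega

/-- the tensor rank of the `n`-qudit N state is `(n−1)(d−1)+1`. -/
theorem N_tensorRank (d n : ℕ) (hd : 2 ≤ d) (hn : 2 ≤ n) :
    tensorRank (Nstate d n) = (n - 1) * (d - 1) + 1 := by
  obtain ⟨d, rfl⟩ : ∃ d', d = d' + 1 := ⟨d - 1, by omega⟩
  obtain ⟨n, rfl⟩ : ∃ n', n = n' + 1 := ⟨n - 1, by omega⟩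
  simp only [Nat.add_sub_cancel]
  refine le_antisymm (Nat.sInf_le (hasRankLE_Nstate d n))
    (le_csInf ⟨_, hasRankLE_Nstate d n⟩ fun r hr => ?_)
  exact le_of_hasRankLE_Nstate_add_zerosTensor (u := 0) rfl (by simpa using hr)

end QIT
end

section
/- For every n ≥ 3 and d ≥ 2 there is a chain of degenerations: the n-qudit L state degenerates into the n-qudit M state via SLOCC, and the n-qudit M state degenerates into the n-qudit N state via SLOCC. -/
namespace QIT

namespace LMNAux

open Finset Filter

attribute [local instance] Classical.propDecidable

lemma diag_applyLin {ι : Type} [Fintype ι] [DecidableEq ι] {α : ι → Type}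
    [∀ i, Fintype (α i)] [∀ i, DecidableEq (α i)]
    (w : ∀ i, α i → ℕ) (T : (∀ i, α i) → ℂ) (ε : ℂ) :
    applyLin (fun i r c => if c = r then ε ^ w i r else 0) T
      = fun j => ε ^ (∑ i, w i (j i)) * T j := by
  funext j
  unfold applyLin
  rw [Finset.sum_eq_single j]
  · simp [Finset.prod_pow_eq_pow_sum]
  · intro m _ hm
    obtain ⟨i, hi⟩ := Function.ne_iff.mp hm
    have hz : (if m i = j i then ε ^ w i (j i) else 0) = 0 := if_neg hi
    exact mul_eq_zero_of_left (Finset.prod_eq_zero (Finset.mem_univ i) hz) _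
  · intro h; exact absurd (Finset.mem_univ j) h

lemma degenerates_of_weights {ι : Type} [Fintype ι] [DecidableEq ι] {α : ι → Type}
    [∀ i, Fintype (α i)] [∀ i, DecidableEq (α i)]
    (T S : (∀ i, α i) → ℂ) (w : ∀ i, α i → ℕ) (e : ℕ)
    (h1 : ∀ j, T j ≠ 0 → e ≤ ∑ i, w i (j i))
    (h2 : ∀ j, S j = if (∑ i, w i (j i)) = e then T j else 0) :
    Degenerates T S := by
  refine ⟨fun i r c => if c = r then Polynomial.X ^ w i r else 0, e, ?_⟩
  have key : ∀ ε : ℂ,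
      applyLin (fun i r c =>
        ((if c = r then (Polynomial.X : Polynomial ℂ) ^ w i r else 0)).eval ε) T
      = fun j => ε ^ (∑ i, w i (j i)) * T j := by
    intro ε
    have h : (fun (i : ι) (r c : α i) =>
        ((if c = r then (Polynomial.X : Polynomial ℂ) ^ w i r else 0)).eval ε)
        = fun i r c => if c = r then ε ^ w i r else 0 := by
      funext i r c; split <;> simp
    rw [h, diag_applyLin]
  simp only [key]
  rw [tendsto_pi_nhds]
  intro j
  simp only [Pi.smul_apply, smul_eq_mul]
  by_cases hT : T j = 0
  · have hS : S j = 0 := by rw [h2 j]; split <;> simp [hT]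
    rw [hS]
    have hz : (fun ε : ℂ => (ε ^ e)⁻¹ * (ε ^ (∑ i, w i (j i)) * T j)) = fun _ => 0 := by
      funext ε; simp [hT]
    rw [hz]; exact tendsto_const_nhds
  · have he := h1 j hT
    set W := ∑ i, w i (j i) with hW
    have hS : S j = (0 : ℂ) ^ (W - e) * T j := by
      rw [h2 j]
      rcases eq_or_lt_of_le he with h | h
      · rw [if_pos h.symm, ← h, Nat.sub_self, pow_zero, one_mul]
      · rw [if_neg (by omega), zero_pow (by omega), zero_mul]
    rw [hS]
    have hcont : Tendsto (fun ε : ℂ => ε ^ (W - e) * T j) (nhdsWithin 0 {0}ᶜ)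
        (nhds ((0 : ℂ) ^ (W - e) * T j)) :=
      (((continuous_pow _).mul continuous_const).tendsto 0).mono_left nhdsWithin_le_nhds
    refine hcont.congr' ?_
    filter_upwards [self_mem_nhdsWithin] with ε (hε : ε ∈ ({0}ᶜ : Set ℂ))
    have hε0 : ε ≠ 0 := hε
    rw [pow_sub₀ _ hε0 he]
    ring

lemma key1 {d n : ℕ} (hd : 2 ≤ d) (m : Fin n → Fin d)
    (hs : ∑ i, (m i : ℕ) = d - 1) :
    (∃ i0, (m i0 : ℕ) = d - 1 ∧ ∀ i, i ≠ i0 → (m i : ℕ) = 0) ∨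
    ((∀ i, (m i : ℕ) ≠ d - 1) ∧
      2 ≤ (univ.filter fun i => (m i : ℕ) ≠ 0).card) := by
  by_cases hex : ∃ i0, (m i0 : ℕ) = d - 1
  · obtain ⟨i0, hi0⟩ := hex
    left
    refine ⟨i0, hi0, ?_⟩
    have hadd := Finset.add_sum_erase univ (fun i => (m i : ℕ)) (mem_univ i0)
    beta_reduce at hadd
    have he : ∑ i ∈ univ.erase i0, (m i : ℕ) = 0 := by omega
    intro i hi
    exact Finset.sum_eq_zero_iff.mp he i (mem_erase.mpr ⟨hi, mem_univ i⟩)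
  · push_neg at hex
    right
    refine ⟨hex, ?_⟩
    by_contra hk
    push_neg at hk
    have hk1 := Finset.card_le_one.mp (by omega :
      (univ.filter fun i => (m i : ℕ) ≠ 0).card ≤ 1)
    have hne : ∃ i0, (m i0 : ℕ) ≠ 0 := by
      by_contra hall
      push_neg at hall
      have h0 : ∑ i, (m i : ℕ) = 0 := Finset.sum_eq_zero fun i _ => hall i
      omega
    obtain ⟨i0, hi0⟩ := hne
    have hmem : i0 ∈ univ.filter fun i => (m i : ℕ) ≠ 0 := by simp [hi0]
    have hz : ∀ i, i ≠ i0 → (m i : ℕ) = 0 := by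
      intro i hi
      by_contra h0
      exact hi (hk1 _ (by simp [h0]) _ hmem)
    have hsing : ∑ i, (m i : ℕ) = (m i0 : ℕ) := Fintype.sum_eq_single i0 hz
    exact hex i0 (by omega)

lemma sum_w0 {d n : ℕ} (hd : 2 ≤ d) (m : Fin n → Fin d) :
    (∑ i, (if (m i : ℕ) = 0 then 0 else if (m i : ℕ) = d - 1 then d + 1 else (m i : ℕ) + 1))
      = (∑ i, (m i : ℕ))
        + (univ.filter fun i => (m i : ℕ) ≠ 0).card
        + (univ.filter fun i => (m i : ℕ) = d - 1).card := by
  rw [card_filter, card_filter, ← Finset.sum_add_distrib, ← Finset.sum_add_distrib]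
  refine Finset.sum_congr rfl fun i _ => ?_
  have h := (m i).isLt
  split_ifs <;> omega

lemma sum_w1 {d n : ℕ} (hd : 2 ≤ d) (m : Fin n → Fin d) :
    (∑ i : Fin n, (if (i : ℕ) + 1 < n then (if (m i : ℕ) = 0 then 0 else (m i : ℕ) + 1)
        else (if (m i : ℕ) = 0 then 0 else if (m i : ℕ) = d - 1 then d else (m i : ℕ))))
      = (∑ i, (m i : ℕ))
        + (univ.filter fun i => (m i : ℕ) = d - 1).card
        + (univ.filter fun i : Fin n =>
            (i : ℕ) + 1 < n ∧ (m i : ℕ) ≠ 0 ∧ (m i : ℕ) ≠ d - 1).card := by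
  rw [card_filter, card_filter, ← Finset.sum_add_distrib, ← Finset.sum_add_distrib]
  refine Finset.sum_congr rfl fun i _ => ?_
  have h := (m i).isLt
  split_ifs <;> omega

lemma card_le_front {d n : ℕ} (hn : 3 ≤ n) (m : Fin n → Fin d) :
    (univ.filter fun i => (m i : ℕ) ≠ 0).card
      ≤ (univ.filter fun i : Fin n => (i : ℕ) + 1 < n ∧ (m i : ℕ) ≠ 0).card + 1 := by
  have hsub : (univ.filter fun i => (m i : ℕ) ≠ 0)
      ⊆ insert (⟨n - 1, by omega⟩ : Fin n)
        (univ.filter fun i : Fin n => (i : ℕ) + 1 < n ∧ (m i : ℕ) ≠ 0) := by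
    intro i hi
    simp only [mem_filter, mem_univ, true_and] at hi
    by_cases hf : (i : ℕ) + 1 < n
    · exact mem_insert_of_mem (by simp [hf, hi])
    · have hv : (i : ℕ) = n - 1 := by have := i.isLt; omega
      exact mem_insert.mpr (Or.inl (Fin.ext hv))
  exact (Finset.card_le_card hsub).trans (Finset.card_insert_le _ _)

end LMNAux

/-- for `n ≥ 3` there is a chain of degenerations
`L(d,n) ⇢ M(d,n) ⇢ N(d,n)` via SLOCC. -/
theorem LMN_degeneration_chain (d n : ℕ) (hd : 2 ≤ d) (hn : 3 ≤ n) :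
    Degenerates (Lstate d n) (Mstate d n) ∧ Degenerates (Mstate d n) (Nstate d n) := by
  classical
  open Finset LMNAux in
  constructor
  · -- L ⇢ M
    apply degenerates_of_weights _ _
      (fun (_ : Fin n) (j : Fin d) =>
        if (j : ℕ) = 0 then 0 else if (j : ℕ) = d - 1 then d + 1 else (j : ℕ) + 1) (d + 1)
    · intro m hT
      have hs : ∑ i, (m i : ℕ) = d - 1 := by
        by_contra h
        exact hT (by simp [Lstate, h])
      rw [sum_w0 hd m]
      rcases key1 hd m hs with ⟨i0, hi0, hz⟩ | ⟨_, hk⟩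
      · have hkpos : 1 ≤ (univ.filter fun i => (m i : ℕ) ≠ 0).card :=
          Finset.card_pos.mpr ⟨i0, by simp [hi0]; omega⟩
        have hcpos : 1 ≤ (univ.filter fun i => (m i : ℕ) = d - 1).card :=
          Finset.card_pos.mpr ⟨i0, by simp [hi0]⟩
        omega
      · omega
    · intro m
      simp only [Lstate, Mstate]
      rw [sum_w0 hd m]
      by_cases hs : ∑ i, (m i : ℕ) = d - 1
      · rcases key1 hd m hs with ⟨i0, hi0, hz⟩ | ⟨hnot, hk⟩
        · have hK : (univ.filter fun i => (m i : ℕ) ≠ 0) = {i0} := by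
            ext i
            simp only [mem_filter, mem_univ, true_and, mem_singleton]
            constructor
            · intro h; by_contra hne; exact h (hz i hne)
            · rintro rfl; omega
          have hC : (univ.filter fun i => (m i : ℕ) = d - 1) = {i0} := by
            ext i
            simp only [mem_filter, mem_univ, true_and, mem_singleton]
            constructor
            · intro h
              by_contra hne
              have := hz i hne
              omega
            · rintro rfl; exact hi0
          rw [hK, hC, card_singleton]
          rw [if_pos ⟨hs, by omega⟩, if_pos (by omega), if_pos hs]
        · have hC : (univ.filter fun i => (m i : ℕ) = d - 1) = ∅ :=
            Finset.filter_false_of_mem fun i _ => hnot i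
          rw [hC, card_empty]
          split_ifs <;> first | rfl | (exfalso; omega)
      · simp [hs]
  · -- M ⇢ N
    apply degenerates_of_weights _ _
      (fun (i : Fin n) (j : Fin d) =>
        if (i : ℕ) + 1 < n then (if (j : ℕ) = 0 then 0 else (j : ℕ) + 1)
        else (if (j : ℕ) = 0 then 0 else if (j : ℕ) = d - 1 then d else (j : ℕ))) d
    · intro m hT
      have hsm : (∑ i, (m i : ℕ) = d - 1) ∧
          (univ.filter fun i => (m i : ℕ) ≠ 0).card ≤ 2 := by
        by_contra h
        exact hT (by simp only [Mstate, if_neg h])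
      obtain ⟨hs, hk2⟩ := hsm
      rw [sum_w1 hd m]
      rcases key1 hd m hs with ⟨i0, hi0, hz⟩ | ⟨hnot, hk⟩
      · have hcpos : 1 ≤ (univ.filter fun i => (m i : ℕ) = d - 1).card :=
          Finset.card_pos.mpr ⟨i0, by simp [hi0]⟩
        omega
      · have hcongr : (univ.filter fun i : Fin n =>
            (i : ℕ) + 1 < n ∧ (m i : ℕ) ≠ 0 ∧ (m i : ℕ) ≠ d - 1)
            = (univ.filter fun i : Fin n => (i : ℕ) + 1 < n ∧ (m i : ℕ) ≠ 0) :=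
          Finset.filter_congr fun i _ => by
            constructor
            · rintro ⟨h1, h2, _⟩; exact ⟨h1, h2⟩
            · rintro ⟨h1, h2⟩; exact ⟨h1, h2, hnot i⟩
        have hfr := card_le_front hn m
        rw [hcongr]
        omega
    · intro m
      simp only [Mstate, Nstate]
      rw [sum_w1 hd m]
      by_cases hs : ∑ i, (m i : ℕ) = d - 1
      · by_cases hk2 : (univ.filter fun i => (m i : ℕ) ≠ 0).card ≤ 2
        · rcases key1 hd m hs with ⟨i0, hi0, hz⟩ | ⟨hnot, hk⟩
          · have hC : (univ.filter fun i => (m i : ℕ) = d - 1) = {i0} := by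
              ext i
              simp only [mem_filter, mem_univ, true_and, mem_singleton]
              constructor
              · intro h
                by_contra hne
                have := hz i hne
                omega
              · rintro rfl; exact hi0
            have hCf : (univ.filter fun i : Fin n =>
                (i : ℕ) + 1 < n ∧ (m i : ℕ) ≠ 0 ∧ (m i : ℕ) ≠ d - 1) = ∅ := by
              refine Finset.filter_false_of_mem fun i _ => ?_
              rintro ⟨-, h2, h3⟩
              by_cases hne : i = i0
              · subst hne; exact h3 hi0
              · exact h2 (hz i hne)
            have hKf : (univ.filter fun i : Fin n =>
                (i : ℕ) + 1 < n ∧ (m i : ℕ) ≠ 0).card ≤ 1 := by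
              have hsub : (univ.filter fun i : Fin n =>
                  (i : ℕ) + 1 < n ∧ (m i : ℕ) ≠ 0) ⊆ {i0} := by
                intro i hi
                simp only [mem_filter, mem_univ, true_and] at hi
                simp only [mem_singleton]
                by_contra hne
                exact hi.2 (hz i hne)
              simpa using Finset.card_le_card hsub
            rw [hC, hCf, card_singleton, card_empty]
            rw [if_pos ⟨hs, hKf⟩, if_pos (by omega), if_pos ⟨hs, hk2⟩]
          · have hC : (univ.filter fun i => (m i : ℕ) = d - 1) = ∅ :=
              Finset.filter_false_of_mem fun i _ => hnot i
            have hcongr : (univ.filter fun i : Fin n =>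
                (i : ℕ) + 1 < n ∧ (m i : ℕ) ≠ 0 ∧ (m i : ℕ) ≠ d - 1)
                = (univ.filter fun i : Fin n => (i : ℕ) + 1 < n ∧ (m i : ℕ) ≠ 0) :=
              Finset.filter_congr fun i _ => by
                constructor
                · rintro ⟨h1, h2, _⟩; exact ⟨h1, h2⟩
                · rintro ⟨h1, h2⟩; exact ⟨h1, h2, hnot i⟩
            have hfr := card_le_front hn m
            rw [hC, hcongr, card_empty]
            split_ifs <;> first | rfl | (exfalso; omega)
        · have hfr := card_le_front hn m
          rw [if_neg (by rintro ⟨-, h⟩; omega),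
            if_neg (show ¬(∑ i, (m i : ℕ) = d - 1 ∧
              (univ.filter fun i => (m i : ℕ) ≠ 0).card ≤ 2) from fun h => hk2 h.2)]
          split_ifs <;> rfl
      · simp [hs]

end QIT
end

section
/- For every n ≥ 3 and d ≥ 2, the border ranks of the n-qudit L, M and N states all equal d: brk(L(d,n)) = brk(M(d,n)) = brk(N(d,n)) = d. -/
namespace QIT

section Infra
open Filter Topology Finset
variable {d n : ℕ}

/-- primitive d-th root of unity -/
noncomputable def zeta (d : ℕ) : ℂ := Complex.exp (2 * Real.pi * Complex.I / d)

lemma sum_zeta (hd : d ≠ 0) (a : ℕ) :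
    ∑ t : Fin d, (zeta d) ^ ((t : ℕ) * a) = if d ∣ a then (d : ℂ) else 0 := by
  have hζ := Complex.isPrimitiveRoot_exp d hd
  rw [Fin.sum_univ_eq_sum_range (fun t => (zeta d) ^ (t * a))]
  simp_rw [mul_comm _ a, pow_mul]
  by_cases h : d ∣ a
  · have : (zeta d) ^ a = 1 := (hζ.pow_eq_one_iff_dvd a).2 h
    simp [this, h]
  · have hne : (zeta d) ^ a ≠ 1 := fun hc => h ((hζ.pow_eq_one_iff_dvd a).1 hc)
    rw [geom_sum_eq hne]
    have hone : zeta d ^ d = 1 := hζ.pow_eq_one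
    have : ((zeta d) ^ a) ^ d = 1 := by
      rw [← pow_mul, mul_comm, pow_mul, hone, one_pow]
    simp [this, h]

lemma dvd_cases {x : ℕ} (hd : 0 < d) (h : d ∣ x) : x = 0 ∨ x = d ∨ 2 * d ≤ x := by
  obtain ⟨q, rfl⟩ := h
  rcases q with _ | _ | q
  · simp
  · right; left; ring
  · right; right; nlinarith

lemma tendsto_ratio (a b : ℕ) (h : b ≤ a) :
    Tendsto (fun ε : ℂ => ε ^ a * (ε ^ b)⁻¹) (𝓝[≠] (0 : ℂ))
      (𝓝 (if a = b then 1 else 0)) := by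
  have hcong : ∀ ε : ℂ, ε ∈ ({0}ᶜ : Set ℂ) → ε ^ a * (ε ^ b)⁻¹ = ε ^ (a - b) := by
    intro ε hε
    have hε0 : ε ≠ 0 := hε
    have : ε ^ a = ε ^ (a - b) * ε ^ b := by rw [← pow_add, Nat.sub_add_cancel h]
    rw [this, mul_assoc, mul_inv_cancel₀ (pow_ne_zero _ hε0), mul_one]
  refine Tendsto.congr' (f₁ := fun ε : ℂ => ε ^ (a - b))
    (eventually_nhdsWithin_of_forall fun ε hε => (hcong ε hε).symm) ?_
  · by_cases hab : a = b
    · simp [hab, Nat.sub_self]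
    · have h1 : a - b ≠ 0 := by omega
      have := (continuous_pow (a - b)).tendsto (0 : ℂ)
      rw [zero_pow h1] at this
      simpa [hab] using this.mono_left nhdsWithin_le_nhds

lemma prod_if_zero [NeZero n] (c : ℂ) (f : Fin n → ℂ) :
    ∏ i : Fin n, ((if i = 0 then c else 1) * f i) = c * ∏ i, f i := by
  rw [Finset.prod_mul_distrib, Finset.prod_ite_eq' Finset.univ (0 : Fin n) (fun _ => c)]
  simp

lemma borderRank_le_of_tendsto {ι : Type} [Fintype ι] {α : ι → Type}
    (T : (∀ i, α i) → ℂ) (r : ℕ) (F : ℂ → (∀ i, α i) → ℂ)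
    (hF : ∀ ε, HasRankLE (F ε) r)
    (hlim : Tendsto F (𝓝[≠] (0 : ℂ)) (𝓝 T)) :
    T ∈ closure {S : (∀ i, α i) → ℂ | HasRankLE S r} :=
  mem_closure_of_tendsto hlim (Eventually.of_forall hF)

lemma det_zero_of_hasRankLE [NeZero n] (mf : Fin d → Fin n → Fin d) {r : ℕ} (hr : r < d)
    (S : (Fin n → Fin d) → ℂ) (hS : HasRankLE S r) :
    (Matrix.of fun j k : Fin d => S (Function.update (mf j) 0 k)).det = 0 := by
  obtain ⟨v, rfl⟩ := hS
  set C : Matrix (Fin d) (Fin r) ℂ :=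
    Matrix.of fun j p => ∏ i ∈ Finset.univ.erase (0 : Fin n), v p i (mf j i) with hC
  set V : Matrix (Fin r) (Fin d) ℂ := Matrix.of fun p k => v p 0 k with hV
  have hM : (Matrix.of fun j k : Fin d =>
      (∑ p, prodTensor (v p)) (Function.update (mf j) 0 k)) = C * V := by
    ext j k
    simp only [Matrix.of_apply, Finset.sum_apply, prodTensor, Matrix.mul_apply, hC, hV]
    refine Finset.sum_congr rfl fun p _ => ?_
    rw [← Finset.mul_prod_erase Finset.univ _ (Finset.mem_univ (0 : Fin n))]
    rw [Function.update_self, mul_comm]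
    congr 1
    refine Finset.prod_congr rfl fun i hi => ?_
    rw [Function.update_of_ne (Finset.mem_erase.1 hi).1]
  rw [hM]
  by_contra hdet
  have hu : IsUnit (C * V) := (Matrix.isUnit_iff_isUnit_det _).2 (Ne.isUnit hdet)
  have h1 : (C * V).rank = d := by
    rw [Matrix.rank_of_isUnit _ hu, Fintype.card_fin]
  have h2 : (C * V).rank ≤ r :=
    le_trans (Matrix.rank_mul_le_right C V) (by simpa using Matrix.rank_le_card_height V)
  omega

lemma le_of_mem_closure [NeZero n] (T : (Fin n → Fin d) → ℂ) (mf : Fin d → Fin n → Fin d)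
    (hT : ∀ j k : Fin d, T (Function.update (mf j) 0 k) = if k = j then 1 else 0)
    {r : ℕ} (hmem : T ∈ closure {S : (Fin n → Fin d) → ℂ | HasRankLE S r}) : d ≤ r := by
  by_contra h
  push_neg at h
  have hcont : Continuous fun S : (Fin n → Fin d) → ℂ =>
      (Matrix.of fun j k : Fin d => S (Function.update (mf j) 0 k)).det := by
    apply Continuous.matrix_det
    exact continuous_pi fun j => continuous_pi fun k => continuous_apply _
  have hclosed : IsClosed {S : (Fin n → Fin d) → ℂ |
      (Matrix.of fun j k : Fin d => S (Function.update (mf j) 0 k)).det = 0} :=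
    isClosed_eq hcont continuous_const
  have hsub : {S : (Fin n → Fin d) → ℂ | HasRankLE S r} ⊆ _ :=
    fun S hS => det_zero_of_hasRankLE mf h S hS
  have hT0 : (Matrix.of fun j k : Fin d => T (Function.update (mf j) 0 k)).det = 0 :=
    closure_minimal hsub hclosed hmem
  have hId : (Matrix.of fun j k : Fin d => T (Function.update (mf j) 0 k)) = 1 := by
    ext j k
    rw [Matrix.of_apply, hT j k, Matrix.one_apply]
    simp [eq_comm]
  rw [hId, Matrix.det_one] at hT0
  exact one_ne_zero hT0

end Infra
section Lpart
open Filter Topology Finset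
variable {d n : ℕ}

noncomputable def vL (d n : ℕ) [NeZero n] (ε : ℂ) (t : Fin d) : Fin n → Fin d → ℂ :=
  fun i j => (if i = 0 then (d : ℂ)⁻¹ * (ε ^ (d - 1))⁻¹ * zeta d ^ (t : ℕ) else 1) *
    (zeta d ^ (t : ℕ) * ε) ^ (j : ℕ)

lemma FL_apply [NeZero n] (hd : 2 ≤ d) (ε : ℂ) (m : Fin n → Fin d) :
    (∑ t : Fin d, prodTensor (vL d n ε t)) m =
      if d ∣ (∑ i, (m i : ℕ)) + 1 then ε ^ (∑ i, (m i : ℕ)) * (ε ^ (d - 1))⁻¹ else 0 := by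
  have hd0 : (d : ℂ) ≠ 0 := Nat.cast_ne_zero.2 (by omega)
  rw [Finset.sum_apply]
  set S := ∑ i, (m i : ℕ) with hS
  have hterm : ∀ t : Fin d, prodTensor (vL d n ε t) m
      = ((d : ℂ)⁻¹ * (ε ^ (d - 1))⁻¹ * ε ^ S) * zeta d ^ ((t : ℕ) * (S + 1)) := by
    intro t
    rw [prodTensor]
    show (∏ i, (if i = 0 then (d : ℂ)⁻¹ * (ε ^ (d - 1))⁻¹ * zeta d ^ (t : ℕ) else 1) *
      (zeta d ^ (t : ℕ) * ε) ^ ((m i : ℕ))) = _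
    rw [prod_if_zero, Finset.prod_pow_eq_pow_sum, ← hS, mul_add, mul_one, pow_add,
      mul_pow, ← pow_mul]
    ring
  simp_rw [hterm, ← Finset.mul_sum, sum_zeta (show d ≠ 0 by omega)]
  split_ifs with h
  · rw [show ((d : ℂ))⁻¹ * (ε ^ (d - 1))⁻¹ * ε ^ S * (d : ℂ)
        = ((d : ℂ)⁻¹ * (d : ℂ)) * (ε ^ S * (ε ^ (d - 1))⁻¹) by ring,
      inv_mul_cancel₀ hd0, one_mul]
  · simp

lemma tendsto_L [NeZero n] (hd : 2 ≤ d) :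
    Tendsto (fun ε : ℂ => ∑ t : Fin d, prodTensor (vL d n ε t)) (𝓝[≠] (0 : ℂ))
      (𝓝 (Lstate d n)) := by
  rw [tendsto_pi_nhds]
  intro m
  simp only [FL_apply hd]
  set S := ∑ i, (m i : ℕ) with hS
  by_cases h : d ∣ S + 1
  · have hle : d - 1 ≤ S := by
      have := Nat.le_of_dvd (by omega) h
      omega
    have hL : Lstate d n m = if S = d - 1 then 1 else 0 := rfl
    rw [hL]
    simpa [h] using tendsto_ratio S (d - 1) hle
  · have hL : Lstate d n m = 0 := by
      rw [Lstate, if_neg]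
      intro hc
      apply h
      have h1 : S + 1 = d := by rw [hS]; omega
      rw [h1]
    rw [hL]
    simp only [h, if_false]
    exact tendsto_const_nhds

def mfL (d n : ℕ) [NeZero n] : Fin d → Fin n → Fin d :=
  fun j i => if (i : ℕ) = n - 1 then ⟨d - 1 - (j : ℕ), by have := j.2; omega⟩
    else ⟨0, by have := j.2; omega⟩

lemma update_mfL_apply [NeZero n] (hn : 2 ≤ n) (j k : Fin d) (i : Fin n) :
    ((Function.update (mfL d n j) 0 k) i : ℕ) =
      (if i = (0 : Fin n) then (k : ℕ) else 0) +
        (if (i : ℕ) = n - 1 then d - 1 - (j : ℕ) else 0) := by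
  by_cases h0 : i = 0
  · subst h0
    rw [Function.update_self, if_pos rfl,
      if_neg (show ¬ (((0 : Fin n) : ℕ) = n - 1) by rw [Fin.val_zero]; omega), add_zero]
  · rw [Function.update_of_ne h0, mfL]
    by_cases hl : (i : ℕ) = n - 1 <;> simp [hl, h0]

lemma update_mfL_sum [NeZero n] (hn : 2 ≤ n) (j k : Fin d) :
    ∑ i, ((Function.update (mfL d n j) 0 k) i : ℕ) = (k : ℕ) + (d - 1 - (j : ℕ)) := by
  have hlast : ∀ i : Fin n, ((i : ℕ) = n - 1) ↔ i = (⟨n - 1, by omega⟩ : Fin n) := by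
    intro i; rw [Fin.ext_iff]
  simp_rw [update_mfL_apply hn j k, hlast]
  rw [Finset.sum_add_distrib, Finset.sum_ite_eq' Finset.univ (0 : Fin n),
    Finset.sum_ite_eq' Finset.univ (⟨n - 1, by omega⟩ : Fin n)]
  simp

lemma hT_L [NeZero n] (hd : 2 ≤ d) (hn : 2 ≤ n) (j k : Fin d) :
    Lstate d n (Function.update (mfL d n j) 0 k) = if k = j then 1 else 0 := by
  have hj := j.2; have hk := k.2
  have hcond : (∑ i, ((Function.update (mfL d n j) 0 k) i : ℕ)) = d - 1 ↔ k = j := by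
    rw [update_mfL_sum hn j k, Fin.ext_iff]
    omega
  rw [Lstate]
  simp only [hcond]

end Lpart
section Mpart
open Filter Topology Finset
variable {d n : ℕ}

lemma borderRank_L [NeZero n] (hd : 2 ≤ d) (hn : 2 ≤ n) : borderRank (Lstate d n) = d := by
  have hmem : Lstate d n ∈ closure {S : (Fin n → Fin d) → ℂ | HasRankLE S d} :=
    borderRank_le_of_tendsto _ d _ (fun ε => ⟨vL d n ε, rfl⟩) (tendsto_L hd)
  exact le_antisymm (Nat.sInf_le hmem)
    (le_csInf ⟨d, hmem⟩ fun r hr => le_of_mem_closure _ (mfL d n) (hT_L hd hn) hr)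

/-- weight of an entry for the M construction: 0, 1 or 2 -/
def pwM (d : ℕ) (j : Fin d) : ℕ :=
  (if (j : ℕ) ≠ 0 then 1 else 0) + (if (j : ℕ) = d - 1 then 1 else 0)

noncomputable def vM (d n : ℕ) [NeZero n] (ε : ℂ) (t : Fin d) : Fin n → Fin d → ℂ :=
  fun i j => (if i = 0 then (d : ℂ)⁻¹ * (ε ^ 2)⁻¹ * zeta d ^ (t : ℕ) else 1) *
    (ε ^ pwM d j * zeta d ^ ((t : ℕ) * (j : ℕ)))

lemma FM_apply [NeZero n] (hd : 2 ≤ d) (ε : ℂ) (m : Fin n → Fin d) :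
    (∑ t : Fin d, prodTensor (vM d n ε t)) m =
      if d ∣ (∑ i, (m i : ℕ)) + 1
      then ε ^ (∑ i, pwM d (m i)) * (ε ^ 2)⁻¹ else 0 := by
  have hd0 : (d : ℂ) ≠ 0 := Nat.cast_ne_zero.2 (by omega)
  rw [Finset.sum_apply]
  set J := ∑ i, (m i : ℕ) with hJ
  set A := ∑ i, pwM d (m i) with hA
  have hterm : ∀ t : Fin d, prodTensor (vM d n ε t) m
      = ((d : ℂ)⁻¹ * (ε ^ 2)⁻¹ * ε ^ A) * zeta d ^ ((t : ℕ) * (J + 1)) := by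
    intro t
    rw [prodTensor]
    show (∏ i, (if i = 0 then (d : ℂ)⁻¹ * (ε ^ 2)⁻¹ * zeta d ^ (t : ℕ) else 1) *
      (ε ^ pwM d (m i) * zeta d ^ ((t : ℕ) * ((m i) : ℕ)))) = _
    rw [prod_if_zero, Finset.prod_mul_distrib, Finset.prod_pow_eq_pow_sum,
      Finset.prod_pow_eq_pow_sum, ← Finset.mul_sum, ← hA, ← hJ,
      mul_add, mul_one, pow_add]
    ring
  simp_rw [hterm, ← Finset.mul_sum, sum_zeta (show d ≠ 0 by omega)]
  split_ifs with h
  · rw [show ((d : ℂ))⁻¹ * (ε ^ 2)⁻¹ * ε ^ A * (d : ℂ)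
        = ((d : ℂ)⁻¹ * (d : ℂ)) * (ε ^ A * (ε ^ 2)⁻¹) by ring,
      inv_mul_cancel₀ hd0, one_mul]
  · simp

lemma M_comb (hd : 2 ≤ d) (m : Fin n → Fin d) (h : d ∣ (∑ i, (m i : ℕ)) + 1) :
    2 ≤ ∑ i, pwM d (m i) ∧
      (((∑ i, (m i : ℕ)) = d - 1 ∧
          (Finset.univ.filter fun i => (m i : ℕ) ≠ 0).card ≤ 2) ↔
        (∑ i, pwM d (m i)) = 2) := by
  set J := ∑ i, (m i : ℕ) with hJ
  set s := ∑ i, (if (m i : ℕ) ≠ 0 then 1 else 0) with hs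
  set e := ∑ i, (if (m i : ℕ) = d - 1 then 1 else 0) with he
  have hAse : (∑ i, pwM d (m i)) = s + e := by
    rw [hs, he, ← Finset.sum_add_distrib]
    exact Finset.sum_congr rfl fun i _ => rfl
  have hcard : (Finset.univ.filter fun i => (m i : ℕ) ≠ 0).card = s := by
    rw [hs, Finset.card_filter]
  have hes : e ≤ s := by
    rw [hs, he]
    refine Finset.sum_le_sum fun i _ => ?_
    split_ifs with h1 h2
    · omega
    · exfalso; omega
    all_goals omega
  have hub : J ≤ (d - 2) * s + e := by
    rw [hJ, hs, he, Finset.mul_sum, ← Finset.sum_add_distrib]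
    refine Finset.sum_le_sum fun i _ => ?_
    have := (m i).2
    split_ifs with h1 h2 <;> omega
  have hlb : (d - 2) * e + s ≤ J := by
    rw [hJ, hs, he, Finset.mul_sum, ← Finset.sum_add_distrib]
    refine Finset.sum_le_sum fun i _ => ?_
    have := (m i).2
    split_ifs with h1 h2 <;> omega
  have hJcase : J = d - 1 ∨ 2 * d ≤ J + 1 := by
    rcases dvd_cases (show 0 < d by omega) h with h0 | h0 | h0 <;> omega
  rw [hAse, hcard]
  constructor
  · by_contra hcon
    push_neg at hcon
    have hs1 : s ≤ 1 := by omega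
    have he1 : e ≤ s := hes
    interval_cases s <;> interval_cases e <;> omega
  · constructor
    · rintro ⟨h1, h2⟩
      interval_cases s <;> interval_cases e <;> omega
    · intro h1
      have hs2 : s ≤ 2 := by omega
      refine ⟨?_, by omega⟩
      interval_cases s <;> interval_cases e <;> omega

lemma tendsto_M [NeZero n] (hd : 2 ≤ d) :
    Tendsto (fun ε : ℂ => ∑ t : Fin d, prodTensor (vM d n ε t)) (𝓝[≠] (0 : ℂ))
      (𝓝 (Mstate d n)) := by
  rw [tendsto_pi_nhds]
  intro m
  simp only [FM_apply hd]
  by_cases h : d ∣ (∑ i, (m i : ℕ)) + 1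
  · obtain ⟨h2A, hiff⟩ := M_comb hd m h
    have hM : Mstate d n m = if (∑ i, pwM d (m i)) = 2 then 1 else 0 := by
      rw [Mstate]
      simp only [hiff]
    rw [hM]
    simpa [h] using tendsto_ratio (∑ i, pwM d (m i)) 2 h2A
  · have hM : Mstate d n m = 0 := by
      rw [Mstate, if_neg]
      rintro ⟨hc, -⟩
      apply h
      have h1 : (∑ i, (m i : ℕ)) + 1 = d := by omega
      rw [h1]
    rw [hM]
    simp only [h, if_false]
    exact tendsto_const_nhds

lemma hT_M [NeZero n] (hd : 2 ≤ d) (hn : 2 ≤ n) (j k : Fin d) :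
    Mstate d n (Function.update (mfL d n j) 0 k) = if k = j then 1 else 0 := by
  have hj := j.2; have hk := k.2
  have hcard : (Finset.univ.filter fun i =>
      ((Function.update (mfL d n j) 0 k i : ℕ)) ≠ 0).card ≤ 2 := by
    have hsub : (Finset.univ.filter fun i =>
        ((Function.update (mfL d n j) 0 k i : ℕ)) ≠ 0) ⊆
        {(0 : Fin n), ⟨n - 1, by omega⟩} := by
      intro i hi
      rw [Finset.mem_filter] at hi
      rw [Finset.mem_insert, Finset.mem_singleton]
      by_contra hcon
      push_neg at hcon
      obtain ⟨h0, hl⟩ := hcon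
      apply hi.2
      rw [update_mfL_apply hn j k i, if_neg h0, if_neg (by rw [Ne, Fin.ext_iff] at hl; simpa using hl)]
    calc (Finset.univ.filter fun i =>
        ((Function.update (mfL d n j) 0 k i : ℕ)) ≠ 0).card
        ≤ ({(0 : Fin n), ⟨n - 1, by omega⟩} : Finset (Fin n)).card := Finset.card_le_card hsub
      _ ≤ 2 := by
          refine le_trans (Finset.card_insert_le _ _) ?_
          simp
  have hcond : ((∑ i, ((Function.update (mfL d n j) 0 k) i : ℕ)) = d - 1 ∧
      (Finset.univ.filter fun i =>
        ((Function.update (mfL d n j) 0 k i : ℕ)) ≠ 0).card ≤ 2) ↔ k = j := by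
    rw [update_mfL_sum hn j k, Fin.ext_iff]
    constructor
    · rintro ⟨h1, -⟩; omega
    · intro h1; exact ⟨by omega, hcard⟩
  rw [Mstate]
  simp only [hcond]

lemma borderRank_M [NeZero n] (hd : 2 ≤ d) (hn : 2 ≤ n) : borderRank (Mstate d n) = d := by
  have hmem : Mstate d n ∈ closure {S : (Fin n → Fin d) → ℂ | HasRankLE S d} :=
    borderRank_le_of_tendsto _ d _ (fun ε => ⟨vM d n ε, rfl⟩) (tendsto_M hd)
  exact le_antisymm (Nat.sInf_le hmem)
    (le_csInf ⟨d, hmem⟩ fun r hr => le_of_mem_closure _ (mfL d n) (hT_M hd hn) hr)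

end Mpart
section Npart
open Filter Topology Finset
variable {d n : ℕ}

def lastI (n : ℕ) [NeZero n] : Fin n :=
  ⟨n - 1, by have := Nat.pos_of_ne_zero (NeZero.ne n); omega⟩

@[simp] lemma lastI_val [NeZero n] : ((lastI n : Fin n) : ℕ) = n - 1 := rfl

noncomputable def vN (d n : ℕ) [NeZero n] (ε : ℂ) (t : Fin d) : Fin n → Fin d → ℂ :=
  fun i j => (if i = 0 then (d : ℂ)⁻¹ * ε⁻¹ else 1) *
    (if (i : ℕ) + 1 < n then ε ^ (if (j : ℕ) ≠ 0 then 1 else 0) * zeta d ^ ((t : ℕ) * (j : ℕ))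
     else if (j : ℕ) = d - 1 then ε else zeta d ^ ((t : ℕ) * ((j : ℕ) + 1)))

lemma filter_notP_eq [NeZero n] :
    (Finset.univ.filter fun i : Fin n => ¬((i : ℕ) + 1 < n)) = {lastI n} := by
  have hn0 := Nat.pos_of_ne_zero (NeZero.ne n)
  ext i
  have := i.2
  simp only [Finset.mem_filter, Finset.mem_univ, true_and, Finset.mem_singleton,
    Fin.ext_iff, lastI_val]
  omega

lemma FN_apply [NeZero n] (hd : 2 ≤ d) (ε : ℂ) (m : Fin n → Fin d) :
    (∑ t : Fin d, prodTensor (vN d n ε t)) m =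
      if (m (lastI n) : ℕ) = d - 1
      then (if d ∣ (∑ i ∈ Finset.univ.filter fun i : Fin n => (i : ℕ) + 1 < n, (m i : ℕ))
        then ε ^ ((∑ i ∈ Finset.univ.filter fun i : Fin n => (i : ℕ) + 1 < n,
          (if (m i : ℕ) ≠ 0 then 1 else 0)) + 1) * (ε ^ 1)⁻¹ else 0)
      else (if d ∣ ((∑ i ∈ Finset.univ.filter fun i : Fin n => (i : ℕ) + 1 < n, (m i : ℕ))
          + ((m (lastI n) : ℕ) + 1))
        then ε ^ (∑ i ∈ Finset.univ.filter fun i : Fin n => (i : ℕ) + 1 < n,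
          (if (m i : ℕ) ≠ 0 then 1 else 0)) * (ε ^ 1)⁻¹ else 0) := by
  have hn0 := Nat.pos_of_ne_zero (NeZero.ne n)
  have hd0 : (d : ℂ) ≠ 0 := Nat.cast_ne_zero.2 (by omega)
  have hnl : ¬(((lastI n : Fin n) : ℕ) + 1 < n) := by rw [lastI_val]; omega
  rw [Finset.sum_apply]
  set JP := ∑ i ∈ Finset.univ.filter fun i : Fin n => (i : ℕ) + 1 < n, (m i : ℕ) with hJP
  set sP := ∑ i ∈ Finset.univ.filter fun i : Fin n => (i : ℕ) + 1 < n,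
      (if (m i : ℕ) ≠ 0 then 1 else 0) with hsP
  have hprod : ∀ t : Fin d, prodTensor (vN d n ε t) m
      = ((d : ℂ)⁻¹ * ε⁻¹) * ((ε ^ sP * zeta d ^ ((t : ℕ) * JP)) *
          (if (m (lastI n) : ℕ) = d - 1 then ε
            else zeta d ^ ((t : ℕ) * ((m (lastI n) : ℕ) + 1)))) := by
    intro t
    rw [prodTensor]
    show (∏ i : Fin n, (if i = 0 then (d : ℂ)⁻¹ * ε⁻¹ else 1) *
      (if (i : ℕ) + 1 < n
        then ε ^ (if ((m i : ℕ)) ≠ 0 then 1 else 0) * zeta d ^ ((t : ℕ) * ((m i) : ℕ))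
        else if ((m i : ℕ)) = d - 1 then ε
          else zeta d ^ ((t : ℕ) * (((m i) : ℕ) + 1)))) = _
    rw [prod_if_zero]
    congr 1
    rw [← Finset.prod_filter_mul_prod_filter_not Finset.univ
      (fun i : Fin n => (i : ℕ) + 1 < n), filter_notP_eq, Finset.prod_singleton, if_neg hnl]
    congr 1
    rw [Finset.prod_congr rfl (fun i hi => if_pos (Finset.mem_filter.1 hi).2),
      Finset.prod_mul_distrib, Finset.prod_pow_eq_pow_sum, ← hsP,
      Finset.prod_pow_eq_pow_sum, ← Finset.mul_sum, ← hJP]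
  by_cases hk : (m (lastI n) : ℕ) = d - 1
  · simp only [hprod, hk, if_true, eq_self_iff_true]
    have hterm : ∀ t : Fin d, (d : ℂ)⁻¹ * ε⁻¹ * (ε ^ sP * zeta d ^ ((t : ℕ) * JP) * ε)
        = ((d : ℂ)⁻¹ * (ε ^ (sP + 1) * (ε ^ 1)⁻¹)) * zeta d ^ ((t : ℕ) * JP) := by
      intro t; rw [pow_succ, pow_one]; ring
    simp_rw [hterm, ← Finset.mul_sum, sum_zeta (show d ≠ 0 by omega)]
    split_ifs with h
    · rw [show ((d : ℂ))⁻¹ * (ε ^ (sP + 1) * (ε ^ 1)⁻¹) * (d : ℂ)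
          = ((d : ℂ)⁻¹ * (d : ℂ)) * (ε ^ (sP + 1) * (ε ^ 1)⁻¹) by ring,
        inv_mul_cancel₀ hd0, one_mul]
    · simp
  · simp only [hprod, hk, if_false]
    have hterm : ∀ t : Fin d, (d : ℂ)⁻¹ * ε⁻¹ *
        (ε ^ sP * zeta d ^ ((t : ℕ) * JP) * zeta d ^ ((t : ℕ) * ((m (lastI n) : ℕ) + 1)))
        = ((d : ℂ)⁻¹ * (ε ^ sP * (ε ^ 1)⁻¹)) *
            zeta d ^ ((t : ℕ) * (JP + ((m (lastI n) : ℕ) + 1))) := by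
      intro t; rw [mul_add ((t : ℕ)), pow_add, pow_one]; ring
    simp_rw [hterm, ← Finset.mul_sum, sum_zeta (show d ≠ 0 by omega)]
    split_ifs with h
    · rw [show ((d : ℂ))⁻¹ * (ε ^ sP * (ε ^ 1)⁻¹) * (d : ℂ)
          = ((d : ℂ)⁻¹ * (d : ℂ)) * (ε ^ sP * (ε ^ 1)⁻¹) by ring,
        inv_mul_cancel₀ hd0, one_mul]
    · simp

end Npart
section Npart2
open Filter Topology Finset
variable {d n : ℕ}

lemma tendsto_N [NeZero n] (hd : 2 ≤ d) (hn : 2 ≤ n) :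
    Tendsto (fun ε : ℂ => ∑ t : Fin d, prodTensor (vN d n ε t)) (𝓝[≠] (0 : ℂ))
      (𝓝 (Nstate d n)) := by
  rw [tendsto_pi_nhds]
  intro m
  simp only [FN_apply hd]
  set JP := ∑ i ∈ Finset.univ.filter fun i : Fin n => (i : ℕ) + 1 < n, (m i : ℕ) with hJP
  set sP := ∑ i ∈ Finset.univ.filter fun i : Fin n => (i : ℕ) + 1 < n,
      (if (m i : ℕ) ≠ 0 then 1 else 0) with hsP
  set k := (m (lastI n) : ℕ) with hk0
  have hkd : k < d := (m (lastI n)).2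
  have h1 : sP ≤ JP := by
    rw [hsP, hJP]
    refine Finset.sum_le_sum fun i _ => ?_
    split_ifs with hi <;> omega
  have h2 : JP ≤ (d - 1) * sP := by
    rw [hsP, hJP, Finset.mul_sum]
    refine Finset.sum_le_sum fun i _ => ?_
    have := (m i).2
    split_ifs with hi <;> omega
  have hsum : (∑ i, (m i : ℕ)) = JP + k := by
    rw [hJP, hk0, ← Finset.sum_filter_add_sum_filter_not Finset.univ
      (fun i : Fin n => (i : ℕ) + 1 < n) (fun i => (m i : ℕ)), filter_notP_eq,
      Finset.sum_singleton]
  have hcard : (Finset.univ.filter fun i : Fin n => (i : ℕ) + 1 < n ∧ (m i : ℕ) ≠ 0).card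
      = sP := by
    rw [Finset.card_filter, hsP, Finset.sum_filter]
    refine Finset.sum_congr rfl fun i _ => ?_
    split_ifs <;> tauto
  have hN : Nstate d n m = if (JP + k = d - 1 ∧ sP ≤ 1) then 1 else 0 := by
    rw [Nstate]
    simp only [hcard, hsum]
  rw [hN]
  by_cases hk : k = d - 1
  · simp only [← hk0, hk, eq_self_iff_true, if_true]
    by_cases hdvd : d ∣ JP
    · have hiff : (JP + (d - 1) = d - 1 ∧ sP ≤ 1) ↔ sP + 1 = 1 := by
        constructor
        · rintro ⟨hc1, -⟩
          omega
        · intro hc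
          have hs0 : sP = 0 := by omega
          rw [hs0, mul_zero] at h2
          omega
      simp only [hiff]
      simpa [hdvd] using tendsto_ratio (sP + 1) 1 (by omega)
    · have hz : ¬(JP + (d - 1) = d - 1 ∧ sP ≤ 1) := by
        rintro ⟨hc1, -⟩
        apply hdvd
        have h0 : JP = 0 := by omega
        rw [h0]
        exact dvd_zero d
      simp only [hdvd, hz, if_false]
      exact tendsto_const_nhds
  · simp only [← hk0, if_neg hk]
    by_cases hdvd : d ∣ JP + (k + 1)
    · have hge : d ≤ JP + (k + 1) := Nat.le_of_dvd (by omega) hdvd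
      have hsP1 : 1 ≤ sP := by
        by_contra hc
        have hs0 : sP = 0 := by omega
        rw [hs0, mul_zero] at h2
        omega
      have hiff : (JP + k = d - 1 ∧ sP ≤ 1) ↔ sP = 1 := by
        constructor
        · rintro ⟨-, hc2⟩; omega
        · intro hc
          rw [hc, mul_one] at h2
          rcases dvd_cases (show 0 < d by omega) hdvd with h0 | h0 | h0 <;> omega
      simp only [hiff]
      have := tendsto_ratio sP 1 hsP1
      simpa [hdvd] using this
    · have hz : ¬(JP + k = d - 1 ∧ sP ≤ 1) := by
        rintro ⟨hc1, -⟩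
        exact hdvd ⟨1, by omega⟩
      simp only [hdvd, hz, if_false]
      exact tendsto_const_nhds

lemma hT_N [NeZero n] (hd : 2 ≤ d) (hn : 2 ≤ n) (j k : Fin d) :
    Nstate d n (Function.update (mfL d n j) 0 k) = if k = j then 1 else 0 := by
  have hj := j.2; have hk := k.2
  have hcard : (Finset.univ.filter fun i : Fin n =>
      (i : ℕ) + 1 < n ∧ ((Function.update (mfL d n j) 0 k i : ℕ)) ≠ 0).card ≤ 1 := by
    have hsub : (Finset.univ.filter fun i : Fin n =>
        (i : ℕ) + 1 < n ∧ ((Function.update (mfL d n j) 0 k i : ℕ)) ≠ 0) ⊆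
        {(0 : Fin n)} := by
      intro i hi
      rw [Finset.mem_filter] at hi
      rw [Finset.mem_singleton]
      by_contra h0
      apply hi.2.2
      rw [update_mfL_apply hn j k i, if_neg h0, if_neg (by omega)]
    simpa using Finset.card_le_card hsub
  have hcond : ((∑ i, ((Function.update (mfL d n j) 0 k) i : ℕ)) = d - 1 ∧
      (Finset.univ.filter fun i : Fin n =>
        (i : ℕ) + 1 < n ∧ ((Function.update (mfL d n j) 0 k i : ℕ)) ≠ 0).card ≤ 1)
      ↔ k = j := by
    rw [update_mfL_sum hn j k, Fin.ext_iff]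
    constructor
    · rintro ⟨h1, -⟩; omega
    · intro h1; exact ⟨by omega, hcard⟩
  rw [Nstate]
  simp only [hcond]

lemma borderRank_N [NeZero n] (hd : 2 ≤ d) (hn : 2 ≤ n) : borderRank (Nstate d n) = d := by
  have hmem : Nstate d n ∈ closure {S : (Fin n → Fin d) → ℂ | HasRankLE S d} :=
    borderRank_le_of_tendsto _ d _ (fun ε => ⟨vN d n ε, rfl⟩) (tendsto_N hd hn)
  exact le_antisymm (Nat.sInf_le hmem)
    (le_csInf ⟨d, hmem⟩ fun r hr => le_of_mem_closure _ (mfL d n) (hT_N hd hn) hr)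

end Npart2

/-- for `n ≥ 3` and `d ≥ 2`, the border ranks of the `n`-qudit
L, M and N states all equal `d`. -/
theorem LMN_borderRank (d n : ℕ) (hd : 2 ≤ d) (hn : 3 ≤ n) :
    borderRank (Lstate d n) = d ∧ borderRank (Mstate d n) = d ∧
      borderRank (Nstate d n) = d := by
  haveI : NeZero n := ⟨by omega⟩
  exact ⟨borderRank_L hd (by omega), borderRank_M hd (by omega), borderRank_N hd (by omega)⟩

end QIT
end

section
/- For every n ≥ 3 and d ≥ 2, an n-qudit GHZ state can be transformed into an n-qudit L state by asymptotic SLOCC with rate one: ω(G(d,n), L(d,n)) = 1. -/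
open Finset Filter Topology

theorem exists_sum_mul_pow_eq_single {F : Type*} [Field F] {D : ℕ} {x : Fin D → F}
    (hx : Function.Injective x) (K : Fin D) :
    ∃ c : Fin D → F, ∀ k : Fin D,
      ∑ s, c s * x s ^ (k : ℕ) = (Pi.single K 1 : Fin D → F) k := by
  let V := Matrix.vandermonde x
  have hV : IsUnit V.det := (Matrix.det_vandermonde_ne_zero_iff.mpr hx).isUnit
  refine ⟨Matrix.vecMul (Pi.single K 1) V⁻¹, fun k => ?_⟩
  have h : Matrix.vecMul (Matrix.vecMul (Pi.single K 1) V⁻¹) V = Pi.single K 1 := by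
    rw [Matrix.vecMul_vecMul, Matrix.nonsing_inv_mul _ hV, Matrix.vecMul_one]
  simpa [Matrix.vecMul, dotProduct, V] using congrFun h k

theorem IsPrimitiveRoot.sum_pow_pow_eq_ite {R : Type*} [Field R] {ζ : R} {d : ℕ}
    (hζ : IsPrimitiveRoot ζ d) (k : ℕ) :
    ∑ u : Fin d, (ζ ^ k) ^ (u : ℕ) = if d ∣ k then (d : R) else 0 := by
  rw [Fin.sum_univ_eq_sum_range (fun u => (ζ ^ k) ^ u)]
  split_ifs with hdk
  · simp [(hζ.pow_eq_one_iff_dvd k).mpr hdk]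
  · have hz : ζ ^ k ≠ 1 := fun h => hdk ((hζ.pow_eq_one_iff_dvd k).mp h)
    rw [geom_sum_eq hz, ← pow_mul, mul_comm, pow_mul, hζ.pow_eq_one, one_pow, sub_self, zero_div]

theorem IsPrimitiveRoot.sum_mul_prod_pow_eq {τ : Type*} [Fintype τ] [DecidableEq τ]
    {ζ : ℂ} {d : ℕ} (hζ : IsPrimitiveRoot ζ d) (hd : 0 < d) {D : ℕ} (c : Fin (D + 1) → ℂ)
    (e : τ → ℕ) :
    ∑ p : (τ → Fin d) × Fin (D + 1),
        (c p.2 * ∏ t, ζ ^ (p.1 t : ℕ) / d) * ∏ t, ((p.2 : ℂ) * ζ ^ (p.1 t : ℕ)) ^ e t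
      = (∑ s : Fin (D + 1), c s * (s : ℂ) ^ (∑ t, e t)) *
          ∏ t, if d ∣ e t + 1 then 1 else 0 := by
  have hterm : ∀ (σ : τ → Fin d) (s : Fin (D + 1)),
      (c s * ∏ t, ζ ^ (σ t : ℕ) / d) * ∏ t, ((s : ℂ) * ζ ^ (σ t : ℕ)) ^ e t
        = c s * (s : ℂ) ^ (∑ t, e t) * ∏ t, (ζ ^ (e t + 1)) ^ (σ t : ℕ) / d := by
    intro σ s
    rw [← Finset.prod_pow_eq_pow_sum, mul_assoc, mul_assoc, ← Finset.prod_mul_distrib,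
      ← Finset.prod_mul_distrib]
    congr 2 with t
    ring
  have hround :
      ∀ t, ∑ u : Fin d, (ζ ^ (e t + 1)) ^ (u : ℕ) / d = if d ∣ e t + 1 then 1 else 0 := by
    intro t
    have : (d : ℂ) ≠ 0 := by exact_mod_cast hd.ne'
    rw [← Finset.sum_div, hζ.sum_pow_pow_eq_ite]
    split_ifs
    · exact div_self this
    · exact zero_div _
  rw [Fintype.sum_prod_type, Finset.sum_comm]
  simp only [hterm, ← Finset.mul_sum, ← Finset.sum_mul]
  rw [← Fintype.prod_sum fun t (u : Fin d) => (ζ ^ (e t + 1)) ^ (u : ℕ) / d]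
  simp only [hround]

theorem forall_eq_sub_one_iff_sum_eq_and_dvd {τ : Type*} [Fintype τ] {d : ℕ} (hd : 0 < d)
    (e : τ → ℕ) :
    (∀ t, e t = d - 1) ↔ ∑ t, e t = Fintype.card τ * (d - 1) ∧ ∀ t, d ∣ e t + 1 := by
  constructor
  · intro he
    simp only [he, Finset.sum_const, Finset.card_univ, smul_eq_mul, true_and]
    exact fun _ => ⟨1, by omega⟩
  · rintro ⟨hsum, hdvd⟩
    have hge : ∀ t, d - 1 ≤ e t := fun t => by
      have := Nat.le_of_dvd (Nat.succ_pos _) (hdvd t)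
      omega
    have := (Finset.sum_eq_sum_iff_of_le (s := univ) fun t _ => hge t).1 (by simp [hsum])
    exact fun t => (this t (Finset.mem_univ t)).symm

theorem tendsto_clog_mul_add_one_div_atTop {b : ℕ} (hb : 1 < b) (c : ℕ) :
    Tendsto (fun N : ℕ => (Nat.clog b (c * N + 1) : ℝ) / N) atTop (𝓝 0) := by
  have hb' : 1 < (b : ℝ) := by exact_mod_cast hb
  have hlogb : Tendsto (fun N : ℕ => Real.logb b N / N) atTop (𝓝 0) := by
    simpa [Real.logb, div_div, mul_comm, Function.comp_def] using
      (Real.tendsto_pow_log_div_mul_add_atTop (Real.log b) 0 1 (Real.log_pos hb').ne').comp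
        tendsto_natCast_atTop_atTop
  have hupper : Tendsto (fun N : ℕ => (Real.logb b (c + 1) + 1) / N + Real.logb b N / N)
      atTop (𝓝 0) := by
    simpa using (tendsto_const_div_atTop_nhds_zero_nat _).add hlogb
  refine tendsto_of_tendsto_of_tendsto_of_le_of_le' tendsto_const_nhds hupper
    (Eventually.of_forall fun N => by positivity) ?_
  filter_upwards [eventually_ge_atTop 1] with N hN
  have hN : (1 : ℝ) ≤ N := by exact_mod_cast hN
  have hclog : (Nat.clog b (c * N + 1) : ℝ) < Real.logb b (c * N + 1) + 1 := by
    have := Int.ceil_lt_add_one (Real.logb b ((c * N + 1 : ℕ) : ℝ))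
    rw [Real.ceil_logb_natCast (by positivity), Int.clog_natCast] at this
    exact_mod_cast this
  have hlog_le : Real.logb b (c * N + 1) ≤ Real.logb b (c + 1) + Real.logb b N := by
    rw [← Real.logb_mul (by positivity) (by positivity)]
    exact Real.logb_le_logb_of_le hb' (by positivity) (by nlinarith)
  rw [← add_div]
  exact div_le_div_of_nonneg_right (by linarith) (by positivity)

theorem tendsto_natCast_div_of_le_of_le_add {a g : ℕ → ℕ} (hlow : ∀ N, N ≤ a N)
    (hup : ∀ N, a N ≤ N + g N) (hg : Tendsto (fun N => (g N : ℝ) / N) atTop (𝓝 0)) :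
    Tendsto (fun N => (a N : ℝ) / N) atTop (𝓝 1) := by
  refine tendsto_of_tendsto_of_tendsto_of_le_of_le' tendsto_const_nhds
    (by simpa using hg.const_add 1) ?_ ?_ <;>
    filter_upwards [eventually_gt_atTop 0] with N hN <;>
    have hN : (0 : ℝ) < N := by exact_mod_cast hN
  · rw [le_div_iff₀ hN, one_mul]
    exact_mod_cast hlow N
  · rw [div_le_iff₀ hN, add_mul, one_mul, div_mul_cancel₀ _ hN.ne']
    exact_mod_cast hup N

namespace QIT

section TensorRank

variable {ι : Type} [Fintype ι] {α : ι → Type}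

theorem prodTensor_zero [Nonempty ι] : prodTensor (0 : ∀ i, α i → ℂ) = 0 := by
  funext j
  exact Finset.prod_eq_zero (Finset.mem_univ (Classical.arbitrary ι)) rfl

theorem prodTensor_update [DecidableEq ι] (v : ∀ i, α i → ℂ) (x : ∀ i, α i) (i₀ : ι)
    (a : α i₀) :
    prodTensor v (Function.update x i₀ a) = v i₀ a * ∏ i ∈ univ.erase i₀, v i (x i) := by
  rw [prodTensor, ← Finset.mul_prod_erase _ _ (Finset.mem_univ i₀), Function.update_self]
  congr 1
  exact Finset.prod_congr rfl fun i hi => by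
    rw [Function.update_of_ne (Finset.ne_of_mem_erase hi)]

theorem prodTensor_monomial {τ : Type} [Fintype τ] {d : ℕ} (x : τ → ℂ)
    (j : ι → τ → Fin d) :
    prodTensor (fun _ κ => ∏ t, x t ^ (κ t : ℕ)) j = ∏ t, x t ^ ∑ i, (j i t : ℕ) := by
  rw [prodTensor, Finset.prod_comm]
  simp only [Finset.prod_pow_eq_pow_sum]

theorem HasRankLE.of_eq_sum {γ : Type} [Fintype γ] {T : (∀ i, α i) → ℂ}
    (w : γ → ∀ i, α i → ℂ) (hT : T = ∑ p, prodTensor (w p)) :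
    HasRankLE T (Fintype.card γ) :=
  ⟨fun p => w ((Fintype.equivFin γ).symm p), by
    rw [hT, ← Equiv.sum_comp (Fintype.equivFin γ).symm]⟩

theorem HasRankLE.of_eq_sum_smul [Nonempty ι] {γ : Type} [Fintype γ] {T : (∀ i, α i) → ℂ}
    (c : γ → ℂ) (w : γ → ∀ i, α i → ℂ) (hT : T = ∑ p, c p • prodTensor (w p)) :
    HasRankLE T (Fintype.card γ) := by
  classical
  let i₀ := Classical.arbitrary ι
  refine .of_eq_sum (fun p i a => (if i = i₀ then c p else 1) * w p i a) (hT.trans ?_)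
  congr! 2 with p
  funext j
  simp only [prodTensor, Pi.smul_apply, smul_eq_mul, Finset.prod_mul_distrib,
    Finset.prod_ite_eq', Finset.mem_univ, if_true]

theorem HasRankLE.mono [Nonempty ι] {T : (∀ i, α i) → ℂ} {r s : ℕ} (hT : HasRankLE T r)
    (hrs : r ≤ s) : HasRankLE T s := by
  obtain ⟨v, rfl⟩ := hT
  obtain ⟨k, rfl⟩ := Nat.exists_eq_add_of_le hrs
  refine ⟨Fin.append v 0, ?_⟩
  simp [Fin.sum_univ_add, prodTensor_zero]

theorem HasRankLE.card_le_of_update_eq_ite [DecidableEq ι] {γ : Type} [Fintype γ]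
    [DecidableEq γ] {T : (∀ i, α i) → ℂ} {r : ℕ} (hT : HasRankLE T r) (i₀ : ι)
    (f : γ → α i₀) (g : γ → ∀ i, α i)
    (hfg : ∀ a b, T (Function.update (g b) i₀ (f a)) = if a = b then 1 else 0) :
    Fintype.card γ ≤ r := by
  obtain ⟨v, rfl⟩ := hT
  let X : Matrix γ (Fin r) ℂ := Matrix.of fun a p => v p i₀ (f a)
  let Y : Matrix (Fin r) γ ℂ := Matrix.of fun p b => ∏ i ∈ univ.erase i₀, v p i (g b i)
  have hXY : X * Y = 1 := by
    ext a b
    simpa [Matrix.mul_apply, Matrix.one_apply, X, Y, prodTensor_update] using hfg a b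
  calc Fintype.card γ = (X * Y).rank := by rw [hXY, Matrix.rank_one]
    _ ≤ X.rank := Matrix.rank_mul_le_left X Y
    _ ≤ r := (Matrix.rank_le_card_width X).trans_eq (Fintype.card_fin r)

variable [DecidableEq ι] [∀ i, Fintype (α i)] {β : ι → Type}

theorem applyLin_sum {γ : Type} [Fintype γ] (A : ∀ i, β i → α i → ℂ)
    (T : γ → (∀ i, α i) → ℂ) : applyLin A (∑ p, T p) = ∑ p, applyLin A (T p) := by
  funext j
  simp only [applyLin, Finset.sum_apply, Finset.mul_sum]
  exact Finset.sum_comm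

theorem applyLin_prodTensor (A : ∀ i, β i → α i → ℂ) (v : ∀ i, α i → ℂ) :
    applyLin A (prodTensor v) = prodTensor fun i b => ∑ a, A i b a * v i a := by
  funext j
  simp only [applyLin, prodTensor, Fintype.prod_sum, ← Finset.prod_mul_distrib]

theorem HasRankLE.applyLin {T : (∀ i, α i) → ℂ} {r : ℕ} (hT : HasRankLE T r)
    (A : ∀ i, β i → α i → ℂ) : HasRankLE (applyLin A T) r := by
  obtain ⟨v, rfl⟩ := hT
  exact ⟨fun p i b => ∑ a, A i b a * v p i a,
    by simp only [applyLin_sum, applyLin_prodTensor]⟩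

end TensorRank

section GHZ

variable {d n m : ℕ}

theorem kpow_Gstate_eq_sum (hn : 0 < n) :
    kpow d n (Gstate d n) m = ∑ κ : Fin m → Fin d, prodTensor fun _ => Pi.single κ 1 := by
  funext j
  simp only [kpow, Gstate, Finset.sum_apply, prodTensor, Pi.single_apply, Fintype.prod_boole]
  by_cases hj : ∃ κ : Fin m → Fin d, ∀ i, j i = κ
  · obtain ⟨κ₀, hκ₀⟩ := hj
    obtain rfl : j = fun _ => κ₀ := funext hκ₀
    have : Nonempty (Fin n) := ⟨⟨0, hn⟩⟩
    simp
  · have hcols : ¬∀ t, ∃ c, ∀ i, j i t = c := fun h => by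
      choose c hc using h
      exact hj ⟨c, fun i => funext fun t => hc t i⟩
    rw [if_neg hcols]
    exact (Finset.sum_eq_zero fun κ _ => if_neg fun h => hj ⟨κ, h⟩).symm

theorem hasRankLE_kpow_Gstate (hn : 0 < n) : HasRankLE (kpow d n (Gstate d n) m) (d ^ m) := by
  simpa using HasRankLE.of_eq_sum _ (kpow_Gstate_eq_sum hn)

theorem sloccTo_kpow_Gstate_iff (hn : 0 < n) {β : Fin n → Type} {T : (∀ i, β i) → ℂ} :
    SLOCCto (kpow d n (Gstate d n) m) T ↔ HasRankLE T (d ^ m) := by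
  constructor
  · rintro ⟨A, rfl⟩
    exact (hasRankLE_kpow_Gstate hn).applyLin A
  · rintro ⟨v, rfl⟩
    let e : (Fin m → Fin d) ≃ Fin (d ^ m) := Fintype.equivFinOfCardEq (by simp)
    refine ⟨fun i x κ => v (e κ) i x, ?_⟩
    simp only [kpow_Gstate_eq_sum hn, applyLin_sum, applyLin_prodTensor, Pi.single_apply,
      mul_ite, mul_one, mul_zero, Finset.sum_ite_eq', mem_univ, if_true]
    exact Equiv.sum_comp e fun p => prodTensor (v p)

end GHZ

section Lstate

variable {d n N : ℕ}

theorem kpow_Lstate_apply (j : Fin n → Fin N → Fin d) :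
    kpow d n (Lstate d n) N j = if ∀ t, ∑ i, (j i t : ℕ) = d - 1 then 1 else 0 := by
  simp only [kpow, Lstate, Fintype.prod_boole]
  congr

theorem pow_le_of_hasRankLE_kpow_Lstate (hn : 2 ≤ n) {r : ℕ}
    (h : HasRankLE (kpow d n (Lstate d n) N) r) : d ^ N ≤ r := by
  let i₀ : Fin n := ⟨0, by omega⟩
  let i₁ : Fin n := ⟨1, hn⟩
  have hi : i₀ ≠ i₁ := by simp [i₀, i₁, Fin.ext_iff]
  let g (b : Fin N → Fin d) (i : Fin n) : Fin N → Fin d :=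
    if i = i₁ then fun t => (b t).rev else fun t => ⟨0, (b t).pos⟩
  have hsum : ∀ a b t, ∑ i, (Function.update (g b) i₀ a i t : ℕ) = a t + (d - 1 - b t) := by
    intro a b t
    rw [Fintype.sum_eq_add i₀ i₁ hi fun i hi' => by simp [g, hi'.1, hi'.2]]
    simp only [Function.update_self, Function.update_of_ne hi.symm, g, if_pos, Fin.val_rev]
    omega
  simpa using h.card_le_of_update_eq_ite i₀ id g fun a b => by
    simp only [kpow_Lstate_apply, hsum, id, funext_iff, Fin.ext_iff]
    congr 1
    refine propext (forall_congr' fun t => ?_)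
    omega

theorem hasRankLE_kpow_Lstate (hd : 0 < d) (hn : 0 < n) (N : ℕ) :
    HasRankLE (kpow d n (Lstate d n) N) (d ^ N * (n * (d - 1) * N + 1)) := by
  let D := n * (d - 1) * N
  have hK : N * (d - 1) < D + 1 := by
    refine Nat.lt_succ_of_le ?_
    rw [mul_comm N]
    exact Nat.mul_le_mul_right N (Nat.le_mul_of_pos_left _ hn)
  obtain ⟨c, hc⟩ := exists_sum_mul_pow_eq_single (x := fun s : Fin (D + 1) => ((s : ℕ) : ℂ))
    (Nat.cast_injective.comp Fin.val_injective) ⟨N * (d - 1), hK⟩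
  obtain ⟨ζ, hζ⟩ : ∃ ζ : ℂ, IsPrimitiveRoot ζ d :=
    ⟨_, Complex.isPrimitiveRoot_exp d hd.ne'⟩
  have : Nonempty (Fin n) := ⟨⟨0, hn⟩⟩
  have hrank := HasRankLE.of_eq_sum_smul
    (fun p : (Fin N → Fin d) × Fin (D + 1) => c p.2 * ∏ t, ζ ^ (p.1 t : ℕ) / d)
    (fun p _ κ => ∏ t, ((p.2 : ℂ) * ζ ^ (p.1 t : ℕ)) ^ (κ t : ℕ))
    (T := kpow d n (Lstate d n) N) ?_
  · simpa [D] using hrank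
  funext j
  simp only [Finset.sum_apply, Pi.smul_apply, smul_eq_mul, prodTensor_monomial,
    hζ.sum_mul_prod_pow_eq hd, kpow_Lstate_apply]
  have hE : ∑ t, ∑ i, (j i t : ℕ) < D + 1 := by
    refine Nat.lt_succ_of_le ?_
    calc ∑ t, ∑ i, (j i t : ℕ) ≤ ∑ _t : Fin N, ∑ _i : Fin n, (d - 1) :=
          Finset.sum_le_sum fun t _ => Finset.sum_le_sum fun i _ =>
            Nat.le_sub_one_of_lt (j i t).isLt
      _ = D := by
        simp only [sum_const, card_univ, Fintype.card_fin, smul_eq_mul, D]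
        ring
  simp only [hc ⟨_, hE⟩, forall_eq_sub_one_iff_sum_eq_and_dvd hd, Fintype.card_fin,
    Fintype.prod_boole, Pi.single_apply, ite_zero_mul_ite_zero, one_mul, Fin.ext_iff]

end Lstate

/-- `ω(G(d,n), L(d,n)) = 1`: the `n`-qudit GHZ state transforms
into the `n`-qudit L state by asymptotic SLOCC with rate one, where
`ω(ψ,φ) = lim_{N→∞} (1/N)·inf{ m | ψ^{⊠m} → φ^{⊠N} via SLOCC }`. -/
theorem GHZ_to_L_asymptotic_rate_one (d n : ℕ) (hd : 2 ≤ d) (hn : 3 ≤ n) :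
    Filter.Tendsto (fun N : ℕ =>
        ((sInf {m : ℕ | SLOCCto (kpow d n (Gstate d n) m) (kpow d n (Lstate d n) N)} : ℕ) : ℝ)
          / (N : ℝ)) Filter.atTop (nhds 1) := by
  have : Nonempty (Fin n) := ⟨⟨0, by omega⟩⟩
  let S N := {m : ℕ | SLOCCto (kpow d n (Gstate d n) m) (kpow d n (Lstate d n) N)}
  have hmem : ∀ N m, m ∈ S N ↔ HasRankLE (kpow d n (Lstate d n) N) (d ^ m) :=
    fun N m => sloccTo_kpow_Gstate_iff (by omega)
  have hupper : ∀ N, N + Nat.clog d (n * (d - 1) * N + 1) ∈ S N := fun N =>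
    (hmem _ _).2 <| (hasRankLE_kpow_Lstate (by omega) (by omega) N).mono <| by
      rw [pow_add]
      exact Nat.mul_le_mul_left _ (Nat.le_pow_clog (by omega) _)
  have hlower : ∀ N, ∀ m ∈ S N, N ≤ m := fun N m hm =>
    (Nat.pow_le_pow_iff_right (by omega)).1 <|
      pow_le_of_hasRankLE_kpow_Lstate (by omega) ((hmem N m).1 hm)
  exact tendsto_natCast_div_of_le_of_le_add (fun N => hlower N _ (Nat.sInf_mem ⟨_, hupper N⟩))
    (fun N => Nat.sInf_le (hupper N)) (tendsto_clog_mul_add_one_div_atTop (by omega) _)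

end QIT
end

section
/- Let P ∈ V₁⊗⋯⊗Vₙ be a persistent tensor of the minimum possible rank, rk(P) = Σ_{k=1}^{n−1}(dim V_k − 1) + 1. Then for every tensor T ∈ U₁⊗⋯⊗Uₙ the tensor rank is additive: rk(T⊕P) = rk(T) + rk(P). -/
/-!
Write `T ⊕ P` as a sum of `r` rank-one terms and run the substitution method on the first
`n - 1` factors in turn, with maps `[[1, h], [0, g]]` on `U_c ⊕ V_c`. By conciseness the
`V_c`-parts of the rank-one terms span `V_c`, so `dim V_c` of them form a basis; letting `h`
send these basis vectors to minus the `U_c`-parts of their terms kills every such term on which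
`g` vanishes. For `c < n - 1` take `g = f ⊗ 1` with `f` a dual basis vector outside the
exceptional subspace of persistence: this kills `dim V_c - 1` terms and leaves the persistent
tensor `⟨f|P` in the corner of the remaining factors. For `c = n - 1` take `g = 0`, killing
`dim V_c` terms. The tensor has no nonzero entry with slot `c` in `V_c` and a later slot in some
`U_k`, so these maps never change the `T`-block, and `rk T ≤ r - Σ_{c < n} (dim V_c - 1) - 1`.
-/

namespace QIT

section TensorRank

variable {ι : Type} [Fintype ι] {α : ι → Type}

lemma hasRankLE_sum_prodTensor_s17 {κ : Type} (s : Finset κ) (w : κ → ∀ i, α i → ℂ) :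
    HasRankLE (∑ p ∈ s, prodTensor (w p)) s.card :=
  ⟨fun q => w (s.equivFin.symm q), by
    rw [← s.sum_coe_sort, ← s.equivFin.symm.sum_comp (fun p => prodTensor (w p))]⟩

lemma HasRankLE.add {T S : (∀ i, α i) → ℂ} {r s : ℕ} (hT : HasRankLE T r)
    (hS : HasRankLE S s) : HasRankLE (T + S) (r + s) := by
  obtain ⟨v, rfl⟩ := hT
  obtain ⟨w, rfl⟩ := hS
  exact ⟨Fin.append v w, by rw [Fin.sum_univ_add]; simp⟩

lemma HasRankLE.comp_map {α' : ι → Type} {T : (∀ i, α i) → ℂ} {r : ℕ} (hT : HasRankLE T r)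
    (σ : ∀ i, α' i → α i) : HasRankLE (fun a => T fun i => σ i (a i)) r := by
  obtain ⟨v, rfl⟩ := hT
  exact ⟨fun p i a => v p i (σ i a), by ext; simp [prodTensor]⟩

lemma tensorRank_le {T : (∀ i, α i) → ℂ} {r : ℕ} (h : HasRankLE T r) : tensorRank T ≤ r :=
  Nat.sInf_le h

lemma prodTensor_eq_zero {v : ∀ i, α i → ℂ} {c : ι} (h : v c = 0) : prodTensor v = 0 := by
  ext m
  exact Finset.prod_eq_zero (Finset.mem_univ c) (by simp [h])

lemma prodTensor_single [DecidableEq ι] [∀ i, DecidableEq (α i)] (m : ∀ i, α i) (i₀ : ι)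
    (a : ℂ) : prodTensor (fun i => Pi.single (m i) (if i = i₀ then a else 1)) = Pi.single m a := by
  ext u
  simp only [prodTensor, Pi.single_apply, Finset.prod_ite_zero, Finset.mem_univ, true_implies,
    Finset.prod_ite_eq', if_true, funext_iff]

variable [∀ i, Fintype (α i)] [Nonempty ι]

lemma exists_hasRankLE (T : (∀ i, α i) → ℂ) : ∃ r, HasRankLE T r := by
  classical
  obtain ⟨i₀⟩ := ‹Nonempty ι›
  have hT : T = ∑ m, prodTensor (fun i => Pi.single (m i) (if i = i₀ then T m else 1)) := by
    simp_rw [prodTensor_single]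
    exact (Finset.univ_sum_single T).symm
  exact ⟨_, hT ▸ hasRankLE_sum_prodTensor_s17 _ _⟩

lemma hasRankLE_tensorRank (T : (∀ i, α i) → ℂ) : HasRankLE T (tensorRank T) :=
  Nat.sInf_mem (s := {r | HasRankLE T r}) (exists_hasRankLE T)

end TensorRank

section DirectSum

variable {ι : Type} [Fintype ι] {α β : ι → Type}

lemma prodTensor_elim_zero (v : ∀ i, α i → ℂ) (u : ∀ i, α i ⊕ β i) :
    prodTensor (fun i => Sum.elim (v i) 0) u =
      if h : ∀ i, (u i).isLeft then prodTensor v (fun i => (u i).getLeft (h i)) else 0 := by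
  split_ifs with h
  · refine Finset.prod_congr rfl fun i _ => ?_
    obtain ⟨a, ha⟩ := Sum.isLeft_iff.mp (h i)
    simp [ha]
  · obtain ⟨i, hi⟩ := not_forall.mp h
    obtain ⟨b, hb⟩ := Sum.isRight_iff.mp (Sum.not_isLeft.mp hi)
    exact Finset.prod_eq_zero (Finset.mem_univ i) (by simp [hb])

lemma prodTensor_zero_elim (w : ∀ i, β i → ℂ) (u : ∀ i, α i ⊕ β i) :
    prodTensor (fun i => Sum.elim 0 (w i)) u =
      if h : ∀ i, (u i).isRight then prodTensor w (fun i => (u i).getRight (h i)) else 0 := by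
  split_ifs with h
  · refine Finset.prod_congr rfl fun i _ => ?_
    obtain ⟨b, hb⟩ := Sum.isRight_iff.mp (h i)
    simp [hb]
  · obtain ⟨i, hi⟩ := not_forall.mp h
    obtain ⟨a, ha⟩ := Sum.isLeft_iff.mp (Sum.not_isRight.mp hi)
    exact Finset.prod_eq_zero (Finset.mem_univ i) (by simp [ha])

lemma hasRankLE_directSum [Nonempty ι] {T : (∀ i, α i) → ℂ} {S : (∀ i, β i) → ℂ} {r s : ℕ}
    (hT : HasRankLE T r) (hS : HasRankLE S s) : HasRankLE (directSum T S) (r + s) := by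
  obtain ⟨v, rfl⟩ := hT
  obtain ⟨w, rfl⟩ := hS
  convert HasRankLE.add (⟨_, rfl⟩ : HasRankLE (∑ p, prodTensor fun i => Sum.elim (v p i) 0) r)
    (⟨_, rfl⟩ : HasRankLE (∑ q, prodTensor fun i => Sum.elim 0 (w q i)) s) using 1
  ext u
  obtain ⟨i₀⟩ := ‹Nonempty ι›
  by_cases hl : ∀ i, (u i).isLeft
  · have hr : ¬ ∀ i, (u i).isRight := fun hr => by
      simpa [← Sum.not_isLeft, hl i₀] using hr i₀
    simp [directSum, Finset.sum_apply, prodTensor_elim_zero, prodTensor_zero_elim, hl, hr]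
  · simp [directSum, Finset.sum_apply, prodTensor_elim_zero, prodTensor_zero_elim, hl]

lemma tensorRank_directSum_le [Nonempty ι] [∀ i, Fintype (α i)] [∀ i, Fintype (β i)]
    (T : (∀ i, α i) → ℂ) (S : (∀ i, β i) → ℂ) :
    tensorRank (directSum T S) ≤ tensorRank T + tensorRank S :=
  tensorRank_le (hasRankLE_directSum (hasRankLE_tensorRank T) (hasRankLE_tensorRank S))

end DirectSum

section PersistentAlong

variable {ι : Type} [DecidableEq ι] {β : ι → Type}

def contractAt (Q : (∀ i, β i) → ℂ) (c : ι) (f : Module.Dual ℂ (β c → ℂ)) :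
    (∀ i, β i) → ℂ :=
  fun m => f (sliceAt Q c m)

/-- `Persistent`, with the factors taken in the order `L` and kept in place: `contractAt Q c f`
still has a (dummy) `c`-th coordinate. -/
def PersistentAlong : List ι → ((∀ i, β i) → ℂ) → Prop
  | [], _ => False
  | [_], _ => False
  | [c, _], Q => Concise Q c
  | c :: c' :: c'' :: t, Q =>
      Concise Q c ∧ ∃ S : Submodule ℂ (Module.Dual ℂ (β c → ℂ)), S ≠ ⊤ ∧
        ∀ f ∉ S, PersistentAlong (c' :: c'' :: t) (contractAt Q c f)

end PersistentAlong

section FinSlots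

variable {n : ℕ} {β : Fin (n + 1) → Type}

lemma sliceAt_comp_tail (Q : (∀ i : Fin n, β i.succ) → ℂ) (c : Fin n) (m : ∀ i, β i) :
    sliceAt (fun m => Q (Fin.tail m)) c.succ m = sliceAt Q c (Fin.tail m) := by
  ext k
  simp [sliceAt, Fin.tail_update_succ]

lemma Concise.comp_tail [Nonempty (β 0)] {Q : (∀ i : Fin n, β i.succ) → ℂ} {c : Fin n}
    (hQ : Concise Q c) : Concise (fun m => Q (Fin.tail m)) c.succ := fun V' hV' =>
  hQ V' fun m => by
    simpa [sliceAt_comp_tail, Fin.tail_cons] using hV' (Fin.cons (Classical.arbitrary _) m)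

lemma contractAt_comp_tail (Q : (∀ i : Fin n, β i.succ) → ℂ) (c : Fin n)
    (f : Module.Dual ℂ (β c.succ → ℂ)) :
    contractAt (fun m => Q (Fin.tail m)) c.succ f = fun m => contractAt Q c f (Fin.tail m) := by
  ext m
  simp [contractAt, sliceAt_comp_tail]

theorem PersistentAlong.comp_tail [Nonempty (β 0)] :
    ∀ {L : List (Fin n)} {Q : (∀ i : Fin n, β i.succ) → ℂ},
      PersistentAlong L Q → PersistentAlong (L.map Fin.succ) (fun m => Q (Fin.tail m))
  | [c, _], _, hQ => Concise.comp_tail (c := c) hQ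
  | c :: _ :: _ :: _, Q, ⟨hc, S, hS, hf⟩ => ⟨hc.comp_tail, S, hS, fun f hfS => by
      rw [contractAt_comp_tail]
      exact (hf f hfS).comp_tail⟩

lemma contractAt_zero (P : (∀ i, β i) → ℂ) (f : Module.Dual ℂ (β 0 → ℂ)) :
    contractAt P 0 f = fun m => contractFirst f P (Fin.tail m) := by
  ext m
  refine congrArg f (funext fun k => ?_)
  show P (Function.update m 0 k) = P (Fin.cons k (Fin.tail m))
  rw [← Fin.update_cons_zero (x := m 0), Fin.cons_self_tail]

end FinSlots

lemma Persistent.two_le : ∀ {n : ℕ} {β : Fin n → Type} {P : (∀ i, β i) → ℂ},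
    Persistent P → 2 ≤ n
  | _ + 2, _, _, _ => by omega

theorem Persistent.persistentAlong : ∀ {n : ℕ} {β : Fin n → Type},
    (∀ i, Nonempty (β i)) → ∀ {P : (∀ i, β i) → ℂ}, Persistent P →
      PersistentAlong (List.finRange n) P
  | 2, _, _, _, hP => hP
  | n + 3, β, hne, P, ⟨hc, S, hS, hf⟩ => by
    have := hne 0
    obtain ⟨c₂, c₃, t, hL⟩ :
        ∃ c₂ c₃ t, (List.finRange (n + 2)).map Fin.succ = c₂ :: c₃ :: t :=
      ⟨_, _, _, by simp only [List.finRange_succ, List.map_cons]; rfl⟩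
    rw [List.finRange_succ, hL]
    refine ⟨hc, S, hS, fun f hfS => ?_⟩
    rw [← hL, contractAt_zero]
    exact (Persistent.persistentAlong (fun i => hne i.succ) (hf f hfS)).comp_tail

section Slices

variable {ι : Type} [DecidableEq ι] {α : ι → Type}

lemma sliceAt_congr (T : (∀ i, α i) → ℂ) (c : ι) {m m' : ∀ i, α i}
    (h : ∀ i, i ≠ c → m i = m' i) : sliceAt T c m = sliceAt T c m' := by
  ext k
  refine congrArg T (funext fun i => ?_)
  by_cases hi : i = c
  · subst hi; simp
  · simp [hi, h i hi]

lemma sliceAt_sum {κ : Type} (s : Finset κ) (T : κ → (∀ i, α i) → ℂ) (c : ι) (m : ∀ i, α i) :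
    sliceAt (∑ p ∈ s, T p) c m = ∑ p ∈ s, sliceAt (T p) c m := by
  ext k
  simp [sliceAt, Finset.sum_apply]

lemma applyAtFactor_sum {κ : Type} (s : Finset κ) (T : κ → (∀ i, α i) → ℂ) (c : ι)
    (π : (α c → ℂ) →ₗ[ℂ] (α c → ℂ)) :
    applyAtFactor (∑ p ∈ s, T p) c π = ∑ p ∈ s, applyAtFactor (T p) c π := by
  ext m
  simp [applyAtFactor, sliceAt_sum, Finset.sum_apply]

variable [Fintype ι]

lemma prod_update_eq_mul_prod_erase {γ : ι → Type} (f : ∀ i, γ i → ℂ) (m : ∀ i, γ i)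
    (c : ι) (k : γ c) :
    ∏ i, f i (Function.update m c k i) = f c k * ∏ i ∈ Finset.univ.erase c, f i (m i) := by
  rw [← Finset.mul_prod_erase _ _ (Finset.mem_univ c), Function.update_self]
  congr 1
  exact Finset.prod_congr rfl fun i hi => by rw [Function.update_of_ne (Finset.ne_of_mem_erase hi)]

lemma sliceAt_prodTensor (v : ∀ i, α i → ℂ) (c : ι) (m : ∀ i, α i) :
    sliceAt (prodTensor v) c m = (∏ i ∈ Finset.univ.erase c, v i (m i)) • v c := by
  ext k
  simp [sliceAt, prodTensor, prod_update_eq_mul_prod_erase (fun i => v i), mul_comm]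

lemma sliceAt_mem_span {r : ℕ} {T : (∀ i, α i) → ℂ} (x : Fin r → ∀ i, α i → ℂ)
    (hx : T = ∑ p, prodTensor (x p)) (c : ι) (m : ∀ i, α i) :
    sliceAt T c m ∈ Submodule.span ℂ (Set.range fun p => x p c) := by
  rw [hx, sliceAt_sum]
  refine Submodule.sum_mem _ fun p _ => ?_
  rw [sliceAt_prodTensor]
  exact Submodule.smul_mem _ _ (Submodule.subset_span ⟨p, rfl⟩)

lemma applyAtFactor_prodTensor (v : ∀ i, α i → ℂ) (c : ι) (π : (α c → ℂ) →ₗ[ℂ] (α c → ℂ)) :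
    applyAtFactor (prodTensor v) c π = prodTensor (Function.update v c (π (v c))) := by
  ext m
  rw [applyAtFactor, sliceAt_prodTensor, map_smul, prodTensor,
    ← Finset.mul_prod_erase _ _ (Finset.mem_univ c), Function.update_self, mul_comm,
    Pi.smul_apply, smul_eq_mul]
  congr 1
  exact Finset.prod_congr rfl fun i hi => by rw [Function.update_of_ne (Finset.ne_of_mem_erase hi)]

lemma hasRankLE_applyAtFactor {r : ℕ} {T : (∀ i, α i) → ℂ} (x : Fin r → ∀ i, α i → ℂ)
    (hx : T = ∑ p, prodTensor (x p)) {c : ι} (π : (α c → ℂ) →ₗ[ℂ] (α c → ℂ))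
    (I : Finset (Fin r)) (hI : ∀ p ∈ I, π (x p c) = 0) :
    HasRankLE (applyAtFactor T c π) (r - I.card) := by
  rw [hx, applyAtFactor_sum, ← Finset.sum_add_sum_compl I]
  simp_rw [applyAtFactor_prodTensor]
  rw [Finset.sum_eq_zero fun p hp => prodTensor_eq_zero (c := c) (by simp [hI p hp]), zero_add]
  simpa [Finset.card_compl] using
    hasRankLE_sum_prodTensor_s17 Iᶜ fun p => Function.update (x p) c (π (x p c))

end Slices

section LinearAlgebra

variable {K V : Type*} [Field K] [AddCommGroup V] [Module K V]

lemma exists_basis_subfamily {κ : Type*} {a : κ → V}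
    (ha : Submodule.span K (Set.range a) = ⊤) [Fintype κ] :
    ∃ (I : Finset κ) (b : Module.Basis I K V), ∀ p, b p = a p := by
  classical
  obtain ⟨B, -, -, hspan, hli⟩ :=
    exists_linearIndepOn_extension (K := K) (v := a) (linearIndepOn_empty K a)
      (Set.empty_subset Set.univ)
  refine ⟨B.toFinset, Module.Basis.mk (v := fun p : B.toFinset => a p) ?_ ?_,
    fun p => Module.Basis.mk_apply ..⟩
  · rw [← Set.coe_toFinset B] at hli
    exact hli
  · have hrange : Set.range (fun p : B.toFinset => a p) = a '' B := by ext; simp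
    rw [hrange, ← ha, Submodule.span_le, ← Set.image_univ]
    exact hspan

lemma exists_coord_notMem_of_ne_top {κ : Type*} [Finite κ] (b : Module.Basis κ K V)
    {S : Submodule K (Module.Dual K V)} (hS : S ≠ ⊤) : ∃ j, b.coord j ∉ S := by
  classical
  by_contra! h
  refine hS (eq_top_iff.mpr ?_)
  rw [← b.dualBasis.span_eq, Submodule.span_le]
  rintro _ ⟨j, rfl⟩
  simpa using h j

lemma card_eq_card_of_basis {κ η : Type*} [Fintype η] {I : Finset κ}
    (b : Module.Basis I K (η → K)) : I.card = Fintype.card η := by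
  rw [← Fintype.card_coe, ← Module.finrank_eq_card_basis b, Module.finrank_fintype_fun_eq_card]

end LinearAlgebra

section Blocks

variable {ι : Type} {α β : ι → Type}

def leftBlock (R : (∀ i, α i ⊕ β i) → ℂ) : (∀ i, α i) → ℂ :=
  fun a => R fun i => .inl (a i)

lemma HasRankLE.leftBlock [Fintype ι] {R : (∀ i, α i ⊕ β i) → ℂ} {r : ℕ} (hR : HasRankLE R r) :
    HasRankLE (leftBlock R) r :=
  hR.comp_map fun _ => .inl

def LeftOrRightOn (R : (∀ i, α i ⊕ β i) → ℂ) (L : List ι) : Prop :=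
  ∀ u, R u ≠ 0 → (∀ i, (u i).isLeft) ∨ ∀ i ∈ L, (u i).isRight

variable [DecidableEq ι]

def pinnedRightBlock (R : (∀ i, α i ⊕ β i) → ℂ) (pin : ∀ i, β i) (L : List ι) :
    (∀ i, β i) → ℂ :=
  fun b => R fun i => .inr (if i ∈ L then b i else pin i)

/-- The block matrix `[[1, h], [0, g]]` on `ℂ^A ⊕ ℂ^B`. -/
def triangularMap {A B : Type} (h : (B → ℂ) →ₗ[ℂ] (A → ℂ)) (g : (B → ℂ) →ₗ[ℂ] (B → ℂ)) :
    ((A ⊕ B) → ℂ) →ₗ[ℂ] ((A ⊕ B) → ℂ) :=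
  (LinearEquiv.sumArrowLequivProdArrow A B ℂ ℂ).symm.toLinearMap ∘ₗ
    ((LinearMap.fst ℂ _ _ + h ∘ₗ LinearMap.snd ℂ _ _).prod (g ∘ₗ LinearMap.snd ℂ _ _)) ∘ₗ
    (LinearEquiv.sumArrowLequivProdArrow A B ℂ ℂ).toLinearMap

@[simp]
lemma triangularMap_inl {A B : Type} (h : (B → ℂ) →ₗ[ℂ] (A → ℂ))
    (g : (B → ℂ) →ₗ[ℂ] (B → ℂ)) (w : (A ⊕ B) → ℂ) (a : A) :
    triangularMap h g w (.inl a) = w (.inl a) + h (fun k => w (.inr k)) a :=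
  rfl

@[simp]
lemma triangularMap_inr {A B : Type} (h : (B → ℂ) →ₗ[ℂ] (A → ℂ))
    (g : (B → ℂ) →ₗ[ℂ] (B → ℂ)) (w : (A ⊕ B) → ℂ) (k : B) :
    triangularMap h g w (.inr k) = g (fun k => w (.inr k)) k :=
  rfl

variable {R : (∀ i, α i ⊕ β i) → ℂ} {c : ι}

lemma LeftOrRightOn.apply_update_inr_eq_zero {c' : ι} {L : List ι}
    (hR : LeftOrRightOn R (c' :: L)) (hc : c ≠ c') {u : ∀ i, α i ⊕ β i} (hu : (u c').isLeft)
    (k : β c) : R (Function.update u c (.inr k)) = 0 := by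
  by_contra hne
  rcases hR _ hne with hl | hr
  · simpa using hl c
  · simpa [Function.update_of_ne hc.symm, ← Sum.not_isLeft, hu] using hr c' List.mem_cons_self

lemma leftBlock_applyAtFactor_triangularMap {c' : ι} {L : List ι}
    (hR : LeftOrRightOn R (c' :: L)) (hc : c ≠ c') (h : (β c → ℂ) →ₗ[ℂ] (α c → ℂ))
    (g : (β c → ℂ) →ₗ[ℂ] (β c → ℂ)) :
    leftBlock (applyAtFactor R c (triangularMap h g)) = leftBlock R := by
  ext a
  have hzero : (fun k => R (Function.update (fun i => .inl (a i)) c (.inr k))) = 0 :=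
    funext (hR.apply_update_inr_eq_zero hc rfl)
  simp [leftBlock, applyAtFactor, sliceAt, hzero]

lemma LeftOrRightOn.applyAtFactor_triangularMap {c' : ι} {L : List ι}
    (hR : LeftOrRightOn R (c' :: L)) (hc : c ∉ c' :: L) (h : (β c → ℂ) →ₗ[ℂ] (α c → ℂ))
    (g : (β c → ℂ) →ₗ[ℂ] (β c → ℂ)) :
    LeftOrRightOn (applyAtFactor R c (triangularMap h g)) L := by
  intro u hu
  obtain ⟨w, hw⟩ : ∃ w, R (Function.update u c w) ≠ 0 := by
    by_contra! hzero
    exact hu (by simp [applyAtFactor, show sliceAt R c u = 0 from funext hzero])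
  have hne : ∀ i, i ≠ c → Function.update u c w i = u i := fun i hi => Function.update_of_ne hi ..
  rcases hR _ hw with hl | hr
  · left
    intro i
    by_cases hi : i = c
    · subst hi
      rcases hk : u i with a | k
      · rfl
      · have hc' : c' ≠ i := fun h' => hc (h' ▸ List.mem_cons_self)
        have hzero : (fun k => R (Function.update u i (.inr k))) = 0 :=
          funext (hR.apply_update_inr_eq_zero hc'.symm (by simpa [hne c' hc'] using hl c'))
        exact absurd (by simp [applyAtFactor, sliceAt, hk, hzero]) hu
    · simpa [hne i hi] using hl i
  · exact Or.inr fun i hi => by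
      simpa [hne i fun h' => hc (h' ▸ List.mem_cons_of_mem _ hi)] using
        hr i (List.mem_cons_of_mem _ hi)

lemma sliceAt_pinnedRightBlock (pin : ∀ i, β i) {L : List ι} (hc : c ∈ L) (b : ∀ i, β i) :
    sliceAt (pinnedRightBlock R pin L) c b =
      fun k => sliceAt R c (fun i => .inr (if i ∈ L then b i else pin i)) (.inr k) := by
  ext k
  refine congrArg R (funext fun i => ?_)
  by_cases hi : i = c
  · subst hi; simp [hc]
  · simp [hi]

lemma pinnedRightBlock_applyAtFactor_triangularMap (pin : ∀ i, β i) {L : List ι} (hc : c ∉ L)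
    (h : (β c → ℂ) →ₗ[ℂ] (α c → ℂ)) (f : Module.Dual ℂ (β c → ℂ)) :
    pinnedRightBlock (applyAtFactor R c (triangularMap h (f.smulRight 1)))
        pin L = contractAt (pinnedRightBlock R pin (c :: L)) c f := by
  ext b
  rw [contractAt, sliceAt_pinnedRightBlock pin List.mem_cons_self,
    sliceAt_congr R c (m' := fun i => .inr (if i ∈ L then b i else pin i))
      fun i hi => by simp [hi]]
  simp [pinnedRightBlock, applyAtFactor, hc]

end Blocks

section Substitution

variable {ι : Type} [Fintype ι] [DecidableEq ι] {α β : ι → Type} {R : (∀ i, α i ⊕ β i) → ℂ}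
  {c : ι} {r : ℕ}

lemma span_eq_top_of_concise_pinnedRightBlock (x : Fin r → ∀ i, α i ⊕ β i → ℂ)
    (hx : R = ∑ p, prodTensor (x p)) (pin : ∀ i, β i) {L : List ι} (hc : c ∈ L)
    (hK : Concise (pinnedRightBlock R pin L) c) :
    Submodule.span ℂ (Set.range fun p (k : β c) => x p c (.inr k)) = ⊤ :=
  hK _ fun b => by
    rw [sliceAt_pinnedRightBlock pin hc]
    have := Submodule.apply_mem_span_image_of_mem_span (LinearMap.funLeft ℂ ℂ Sum.inr)
      (sliceAt_mem_span x hx c fun i => .inr (if i ∈ L then b i else pin i))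
    rwa [← Set.range_comp] at this

lemma hasRankLE_applyAtFactor_triangularMap (x : Fin r → ∀ i, α i ⊕ β i → ℂ)
    (hx : R = ∑ p, prodTensor (x p)) {I : Finset (Fin r)} (b : Module.Basis I ℂ (β c → ℂ))
    (hb : ∀ p, b p = fun k => x p c (.inr k)) (g : (β c → ℂ) →ₗ[ℂ] (β c → ℂ)) (J : Finset I)
    (hJ : ∀ p ∈ J, g (b p) = 0) :
    HasRankLE (applyAtFactor R c (triangularMap (b.constr ℂ fun p a => -x p c (.inl a)) g))
      (r - J.card) := by
  rw [← Finset.card_map (Function.Embedding.subtype _)]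
  refine hasRankLE_applyAtFactor x hx _ _ fun _ hq => ?_
  obtain ⟨p, hp, rfl⟩ := Finset.mem_map.mp hq
  ext (a | k)
  · simp only [Function.Embedding.coe_subtype, triangularMap_inl, ← hb p,
      Module.Basis.constr_basis]
    simp
  · simp only [Function.Embedding.coe_subtype, triangularMap_inr, ← hb p, hJ p hp]
    rfl

variable [∀ i, Fintype (β i)]

theorem tensorRank_leftBlock_add_le (pin : ∀ i, β i) : ∀ (L : List ι), L.Nodup →
    ∀ {R : (∀ i, α i ⊕ β i) → ℂ} {r : ℕ}, LeftOrRightOn R L.tail →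
      PersistentAlong L (pinnedRightBlock R pin L) → HasRankLE R r →
      tensorRank (leftBlock R) + ((L.dropLast.map fun i => Fintype.card (β i) - 1).sum + 1) ≤ r
  | [c, c'], hL, R, r, hsupp, hK, ⟨x, hx⟩ => by
    obtain ⟨I, b, hb⟩ := exists_basis_subfamily
      (span_eq_top_of_concise_pinnedRightBlock x hx pin List.mem_cons_self hK)
    have hc : c ≠ c' := by simpa using hL
    have hrank := hasRankLE_applyAtFactor_triangularMap x hx b hb 0 Finset.univ (by simp)
    have hT := tensorRank_le
      (leftBlock_applyAtFactor_triangularMap hsupp hc _ 0 ▸ hrank.leftBlock)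
    have hI := card_eq_card_of_basis b
    have hIr : I.card ≤ r := by simpa using I.card_le_univ
    have hpos : 0 < Fintype.card (β c) := Fintype.card_pos_iff.mpr ⟨pin c⟩
    simp only [Finset.card_univ, Fintype.card_coe] at hT
    simp only [List.dropLast_cons_cons, List.dropLast_singleton, List.map_cons, List.map_nil,
      List.sum_cons, List.sum_nil]
    omega
  | c :: c' :: c'' :: t, hL, R, r, hsupp, ⟨hK, S, hS, hf⟩, ⟨x, hx⟩ => by
    obtain ⟨I, b, hb⟩ := exists_basis_subfamily
      (span_eq_top_of_concise_pinnedRightBlock x hx pin List.mem_cons_self hK)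
    obtain ⟨j, hj⟩ := exists_coord_notMem_of_ne_top b hS
    have hc : c ∉ c' :: c'' :: t := (List.nodup_cons.mp hL).1
    have hrank := hasRankLE_applyAtFactor_triangularMap x hx b hb ((b.coord j).smulRight 1)
      (Finset.univ.erase j) fun p hp => by
        simp [Module.Basis.coord_apply, Finset.ne_of_mem_erase hp]
    have ih := tensorRank_leftBlock_add_le pin (c' :: c'' :: t) hL.of_cons
      (hsupp.applyAtFactor_triangularMap hc _ _)
      (by rw [pinnedRightBlock_applyAtFactor_triangularMap pin hc]; exact hf _ hj) hrank
    rw [leftBlock_applyAtFactor_triangularMap hsupp (fun h => hc (h ▸ List.mem_cons_self))] at ih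
    have hI := card_eq_card_of_basis b
    have hIr : I.card ≤ r := by simpa using I.card_le_univ
    simp only [Finset.card_erase_of_mem (Finset.mem_univ j), Finset.card_univ,
      Fintype.card_coe] at ih
    rw [List.dropLast_cons_cons, List.map_cons, List.sum_cons]
    omega

end Substitution

section DirectSumBlocks

variable {ι : Type} [Fintype ι] {α β : ι → Type}

lemma leftBlock_directSum (T : (∀ i, α i) → ℂ) (S : (∀ i, β i) → ℂ) :
    leftBlock (directSum T S) = T := by
  ext a
  simp [leftBlock, directSum]

lemma pinnedRightBlock_directSum [DecidableEq ι] [Nonempty ι] (T : (∀ i, α i) → ℂ)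
    (S : (∀ i, β i) → ℂ) (pin : ∀ i, β i) {L : List ι} (hL : ∀ i, i ∈ L) :
    pinnedRightBlock (directSum T S) pin L = S := by
  ext b
  simp [pinnedRightBlock, directSum, hL]

lemma leftOrRightOn_directSum (T : (∀ i, α i) → ℂ) (S : (∀ i, β i) → ℂ) (L : List ι) :
    LeftOrRightOn (directSum T S) L := by
  intro u hu
  by_contra! h
  obtain ⟨⟨i, hi⟩, j, -, hj⟩ := h
  exact hu (by rw [directSum, dif_neg fun h => hi (h i), dif_neg fun h => hj (h j)])

end DirectSumBlocks

lemma nonempty_of_tensorRank_ne_zero {ι : Type} [Fintype ι] {β : ι → Type}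
    {P : (∀ i, β i) → ℂ} (hP : tensorRank P ≠ 0) (i : ι) : Nonempty (β i) := by
  by_contra hi
  rw [not_nonempty_iff] at hi
  exact hP (Nat.le_zero.mp (tensorRank_le ⟨Fin.elim0, funext fun b => isEmptyElim (b i)⟩))

lemma sum_dropLast_finRange {M : Type*} [AddCommMonoid M] (n : ℕ) (g : Fin n → M) :
    ((List.finRange n).dropLast.map g).sum =
      ∑ k ∈ Finset.univ.filter (fun k : Fin n => (k : ℕ) + 1 < n), g k := by
  cases n with
  | zero => simp
  | succ m =>
    rw [List.finRange_succ_last, List.dropLast_concat, List.map_map, Finset.sum_filter,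
      Fin.sum_univ_castSucc]
    simp [Fin.sum_univ_def, Function.comp_def]

/-- the tensor rank is additive on direct sums with a persistent
summand of the minimum possible rank `Σ_{k=1}^{n-1}(dim V_k − 1) + 1`. -/
theorem directSum_rank_additive
    {n : ℕ} {α β : Fin n → Type} [∀ i, Fintype (α i)] [∀ i, Fintype (β i)]
    (P : (∀ i, β i) → ℂ) (hP : Persistent P)
    (hmin : tensorRank P =
      (∑ k ∈ Finset.univ.filter (fun k : Fin n => (k : ℕ) + 1 < n),
        (Fintype.card (β k) - 1)) + 1)
    (T : (∀ i, α i) → ℂ) :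
    tensorRank (directSum T P) = tensorRank T + tensorRank P := by
  obtain ⟨m, rfl⟩ : ∃ m, n = m + 2 := ⟨n - 2, by have := hP.two_le; omega⟩
  have hne := nonempty_of_tensorRank_ne_zero (P := P) (by omega)
  refine le_antisymm (tensorRank_directSum_le T P) ?_
  have key := tensorRank_leftBlock_add_le (fun i => (hne i).some) (List.finRange (m + 2))
    (List.nodup_finRange _) (leftOrRightOn_directSum T P _)
    (by rw [pinnedRightBlock_directSum T P _ (List.mem_finRange)]; exact hP.persistentAlong hne)
    (hasRankLE_tensorRank _)
  rw [leftBlock_directSum, sum_dropLast_finRange] at key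
  omega

end QIT
end
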